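/- arXiv:2311.18109 — 3 statements merged into one kernel-verified Lean document; each statement's English description precedes it below -/
import Mathlib

section
/- With notation as above (g = a P̃ Ûᵗ P from g ∈ SU(1,d) with nonzero entries a, b_i, c_i), set C = P† J P = diag(1, -|p₁|², ..., -|p_d|²) and C̃ = P̃† J P̃ = diag(1, -|p̃₁|², ..., -|p̃_d|²), where p_i = b_i/a, p̃_i = c_i/a. Then the condition g† J g = J is equivalent to Û† C Û C̃ = |p₀|² I_{d+1}, where |p₀|² = |a|^{-2}. -/
open Matrix

noncomputable def Jmat (d : ℕ) : Matrix (Fin (d+1)) (Fin (d+1)) ℂ :=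
  Matrix.diagonal (fun i => if i = 0 then 1 else -1)

private lemma cyc {n : Type*} [Fintype n] [DecidableEq n] (c : ℂ) (X Y : Matrix n n ℂ) :
    c • (X * Y) = 1 ↔ c • (Y * X) = 1 := by
  rw [← Matrix.mul_smul, mul_eq_one_comm, Matrix.smul_mul]

private lemma tsp {n : Type*} [Fintype n] [DecidableEq n] (c : ℂ) (X : Matrix n n ℂ) :
    c • X = 1 ↔ c • Xᵀ = 1 := by
  constructor <;> intro h
  · rw [← Matrix.transpose_smul, h, Matrix.transpose_one]
  · have h2 := congrArg Matrix.transpose h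
    simpa [Matrix.transpose_smul] using h2

private lemma mydiag_one {n : Type*} [Fintype n] [DecidableEq n] (f : n → ℂ)
    (hf : ∀ i, f i = 1) : Matrix.diagonal f = 1 := by
  rw [show f = fun _ => (1:ℂ) from funext hf, Matrix.diagonal_one]

/-- With `P = diag(1, b/a)`, `P̃ = diag(1, c/a)`, `Û` having first row/column all `1` and
`Û i j = a D_{j,i}/(b_i c_j)` otherwise, `C = Pᴴ J P`, `C̃ = P̃ᴴ J P̃`, and
`|p₀|² = |a|⁻²`, the condition `gᴴ J g = J` is equivalent to
`Ûᴴ C Û C̃ = |p₀|² • I`. -/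
theorem stmt11 (d : ℕ) (g : Matrix (Fin (d+1)) (Fin (d+1)) ℂ)
    (hdet : g.det = 1)
    (ha : g 0 0 ≠ 0) (hb : ∀ i : Fin (d+1), i ≠ 0 → g 0 i ≠ 0)
    (hc : ∀ i : Fin (d+1), i ≠ 0 → g i 0 ≠ 0) :
    (gᴴ * Jmat d * g = Jmat d) ↔
      (letI P : Matrix (Fin (d+1)) (Fin (d+1)) ℂ :=
        Matrix.diagonal (fun i => if i = 0 then 1 else g 0 i / g 0 0)
      letI Pt : Matrix (Fin (d+1)) (Fin (d+1)) ℂ :=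
        Matrix.diagonal (fun i => if i = 0 then 1 else g i 0 / g 0 0)
      letI U : Matrix (Fin (d+1)) (Fin (d+1)) ℂ :=
        Matrix.of fun i j => if i = 0 ∨ j = 0 then (1:ℂ) else g 0 0 * g j i / (g 0 i * g j 0)
      Uᴴ * (Pᴴ * Jmat d * P) * U * (Ptᴴ * Jmat d * Pt) =
        ((‖g 0 0‖⁻¹ ^ 2 : ℝ) : ℂ) • 1) := by
  classical
  show (gᴴ * Jmat d * g = Jmat d) ↔
      ((Matrix.of fun i j => if i = 0 ∨ j = 0 then (1:ℂ) else
          g 0 0 * g j i / (g 0 i * g j 0))ᴴ *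
        ((Matrix.diagonal (fun i => if i = 0 then 1 else g 0 i / g 0 0))ᴴ * Jmat d *
          Matrix.diagonal (fun i => if i = 0 then 1 else g 0 i / g 0 0)) *
        (Matrix.of fun i j => if i = 0 ∨ j = 0 then (1:ℂ) else
          g 0 0 * g j i / (g 0 i * g j 0)) *
        ((Matrix.diagonal (fun i => if i = 0 then 1 else g i 0 / g 0 0))ᴴ * Jmat d *
          Matrix.diagonal (fun i => if i = 0 then 1 else g i 0 / g 0 0)) =
        ((‖g 0 0‖⁻¹ ^ 2 : ℝ) : ℂ) • 1)
  have ha0 : g 0 0 ≠ 0 := ha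
  set pv : Fin (d+1) → ℂ := fun i => if i = 0 then 1 else g 0 i / g 0 0 with hpv
  set ptv : Fin (d+1) → ℂ := fun i => if i = 0 then 1 else g i 0 / g 0 0 with hptv
  set ev : Fin (d+1) → ℂ := fun i => if i = 0 then 1 else g 0 0 / g 0 i with hev
  set P : Matrix (Fin (d+1)) (Fin (d+1)) ℂ := Matrix.diagonal pv with hP
  set Pt : Matrix (Fin (d+1)) (Fin (d+1)) ℂ := Matrix.diagonal ptv with hPt
  set E : Matrix (Fin (d+1)) (Fin (d+1)) ℂ := Matrix.diagonal ev with hE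
  set U : Matrix (Fin (d+1)) (Fin (d+1)) ℂ :=
    Matrix.of fun i j => if i = 0 ∨ j = 0 then (1:ℂ) else g 0 0 * g j i / (g 0 i * g j 0) with hU
  set J : Matrix (Fin (d+1)) (Fin (d+1)) ℂ := Jmat d with hJ
  set A : Matrix (Fin (d+1)) (Fin (d+1)) ℂ := Pᴴ * J * P with hA
  set B : Matrix (Fin (d+1)) (Fin (d+1)) ℂ := Ptᴴ * J * Pt with hB
  set c : ℂ := star (g 0 0) * g 0 0 with hcdef
  have hcne : c ≠ 0 := mul_ne_zero (star_ne_zero.2 ha0) ha0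
  -- factorization of g
  have h_fact : g = g 0 0 • (Pt * Uᵀ * P) := by
    ext i j
    have hentry : (Pt * Uᵀ * P) i j = ptv i * U j i * pv j := by
      rw [hP, hPt, Matrix.mul_diagonal, Matrix.diagonal_mul, Matrix.transpose_apply]
    rw [Matrix.smul_apply, hentry]
    rcases eq_or_ne i 0 with hi | hi <;> rcases eq_or_ne j 0 with hj | hj
    · simp [hpv, hptv, hU, hi, hj]
    · simp only [hpv, hptv, hU, Matrix.of_apply, hi, hj, if_neg, if_pos, eq_self_iff_true,
        or_true, true_or, if_true, smul_eq_mul, ↓reduceIte]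
      field_simp
    · simp only [hpv, hptv, hU, Matrix.of_apply, hi, hj, if_neg, if_pos, eq_self_iff_true,
        or_true, true_or, if_true, smul_eq_mul, ↓reduceIte]
      field_simp
    · simp only [hpv, hptv, hU, Matrix.of_apply, hi, hj, if_neg, if_false, or_self,
        smul_eq_mul]
      field_simp [hb j hj, hc i hi]
  -- inverses
  have hEP : E * P = 1 := by
    rw [hE, hP, Matrix.diagonal_mul_diagonal]
    apply mydiag_one
    intro i
    rcases eq_or_ne i 0 with hi | hi
    · simp [hev, hpv, hi]
    · simp only [hev, hpv, hi, if_neg, ↓reduceIte]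
      field_simp
      exact div_self (hb i hi)
  have hPE : P * E = 1 := by
    rw [mul_eq_one_comm]; exact hEP
  -- key diagonal identity: A * (Eᴴ J E) = 1
  have hAE : A * (Eᴴ * J * E) = 1 := by
    rw [hA, hE, hP, hJ, Jmat, Matrix.diagonal_conjTranspose, Matrix.diagonal_conjTranspose]
    simp only [Matrix.diagonal_mul_diagonal]
    apply mydiag_one
    intro i
    rcases eq_or_ne i 0 with hi | hi
    · simp [hev, hpv, hi]
    · simp only [hev, hpv, hi, if_neg, Pi.star_apply, star_div₀, ↓reduceIte]
      have h1 : g 0 i ≠ 0 := hb i hi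
      have h2 : (starRingEnd ℂ) (g 0 i) ≠ 0 := (map_ne_zero (starRingEnd ℂ)).2 h1
      have h3 : (starRingEnd ℂ) (g 0 0) ≠ 0 := (map_ne_zero (starRingEnd ℂ)).2 ha0
      field_simp
      exact div_self (mul_ne_zero (star_ne_zero.2 h1) (star_ne_zero.2 ha0))
  -- symmetry of A and B
  have hAt : Aᵀ = A := by
    rw [hA, hP, hJ, Jmat, Matrix.diagonal_conjTranspose, Matrix.diagonal_mul_diagonal,
      Matrix.diagonal_mul_diagonal, Matrix.diagonal_transpose]
  have hBt : Bᵀ = B := by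
    rw [hB, hPt, hJ, Jmat, Matrix.diagonal_conjTranspose, Matrix.diagonal_mul_diagonal,
      Matrix.diagonal_mul_diagonal, Matrix.diagonal_transpose]
  -- computation of gᴴ J g
  have key1 : gᴴ * J * g = Pᴴ * (c • ((Uᵀ)ᴴ * B * Uᵀ)) * P := by
    rw [hB]
    conv_lhs => rw [h_fact]
    simp only [Matrix.conjTranspose_smul, Matrix.conjTranspose_mul, Matrix.smul_mul,
      Matrix.mul_smul, smul_smul, hcdef, mul_assoc, mul_comm (g 0 0) (star (g 0 0))]
  have step1 : (gᴴ * J * g = J) ↔ (A * (c • ((Uᵀ)ᴴ * B * Uᵀ)) = 1) := by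
    rw [key1]
    set M : Matrix (Fin (d+1)) (Fin (d+1)) ℂ := c • ((Uᵀ)ᴴ * B * Uᵀ) with hM
    constructor
    · intro h
      have hMval : M = Eᴴ * J * E := by
        calc M = (Eᴴ * Pᴴ) * M * (P * E) := by
                  rw [← Matrix.conjTranspose_mul, hPE, Matrix.conjTranspose_one, one_mul, mul_one]
          _ = Eᴴ * (Pᴴ * M * P) * E := by noncomm_ring
          _ = Eᴴ * J * E := by rw [h]
      rw [hMval]; exact hAE
    · intro h
      have hMA : M * A = 1 := by rw [mul_eq_one_comm]; exact h
      have hMval : M = Eᴴ * J * E := by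
        calc M = M * (A * (Eᴴ * J * E)) := by rw [hAE, mul_one]
          _ = (M * A) * (Eᴴ * J * E) := (mul_assoc _ _ _).symm
          _ = Eᴴ * J * E := by rw [hMA, one_mul]
      rw [hMval]
      calc Pᴴ * (Eᴴ * J * E) * P = (Pᴴ * Eᴴ) * J * (E * P) := by noncomm_ring
        _ = J := by
            rw [← Matrix.conjTranspose_mul, hEP, Matrix.conjTranspose_one, one_mul, mul_one]
  -- transpose and cyclic manipulations
  have step2 : (A * (c • ((Uᵀ)ᴴ * B * Uᵀ)) = 1) ↔ (c • (Uᴴ * A * U * B) = 1) := by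
    rw [Matrix.mul_smul, tsp]
    have ht : (A * ((Uᵀ)ᴴ * B * Uᵀ))ᵀ = U * (B * (Uᴴ * A)) := by
      calc (A * ((Uᵀ)ᴴ * B * Uᵀ))ᵀ
          = (Uᵀ)ᵀ * ((Uᵀ)ᴴ * B)ᵀ * Aᵀ := by
            simp [Matrix.transpose_mul, mul_assoc]
        _ = U * (Bᵀ * ((Uᵀ)ᴴ)ᵀ) * A := by
            rw [Matrix.transpose_transpose, Matrix.transpose_mul, hAt]
        _ = U * (B * (Uᴴ * A)) := by
            rw [hBt]
            have h5 : ((Uᵀ)ᴴ)ᵀ = Uᴴ := rfl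
            rw [h5, mul_assoc, mul_assoc]
    rw [ht, cyc, show (B * (Uᴴ * A)) * U = B * (Uᴴ * A * U) by noncomm_ring, cyc,
      show (Uᴴ * A * U) * B = Uᴴ * A * U * B by noncomm_ring]
  have hscal : ((‖g 0 0‖⁻¹ ^ 2 : ℝ) : ℂ) = c⁻¹ := by
    rw [hcdef]
    have h1 : star (g 0 0) * g 0 0 = (Complex.normSq (g 0 0) : ℂ) := by
      rw [Complex.star_def, Complex.normSq_eq_conj_mul_self]
    rw [h1, inv_pow, ← Complex.ofReal_inv, Complex.sq_norm]
  have last : (c • (Uᴴ * A * U * B) = 1) ↔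
      (Uᴴ * A * U * B = c⁻¹ • (1 : Matrix (Fin (d+1)) (Fin (d+1)) ℂ)) := by
    constructor
    · intro h; rw [← h, smul_smul, inv_mul_cancel₀ hcne, one_smul]
    · intro h; rw [h, smul_smul, mul_inv_cancel₀ hcne, one_smul]
  rw [step1, step2, last, hscal]
end

section
/- For the multivariate Meixner polynomials defined by the generating function (1 - ∑_j t_j)^{-β-|x|} ∏_i (1 - ∑_j U_{i,j} t_j)^{x_i} = ∑_{n ∈ ℕ₀ᵈ} ((β)_{|n|}/n!) M_n(x;U,β) tⁿ (with x ∈ ℕ₀ᵈ), one has the explicit hypergeometric expression M_n(x;U,β) = ∑_{A=(a_{i,j}) ∈ M_d(ℕ₀)} [∏_j (-n_j)_{∑_i a_{i,j}} ∏_i (-x_i)_{∑_j a_{i,j}} / (β)_{∑_{i,j} a_{i,j}}] ∏_{i,j} (1-U_{i,j})^{a_{i,j}}/a_{i,j}!. -/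
/-- The Pochhammer symbol `(z)_k = z(z+1)⋯(z+k-1)`. -/
noncomputable def poch (z : ℂ) (k : ℕ) : ℂ := ∏ i ∈ Finset.range k, (z + i)

lemma poch_zero (z : ℂ) : poch z 0 = 1 := by simp [poch]

lemma poch_succ (z : ℂ) (k : ℕ) : poch z (k+1) = poch z k * (z + k) := by
  simp [poch, Finset.prod_range_succ]

lemma poch_add (z : ℂ) (a b : ℕ) : poch z (a + b) = poch z a * poch (z + a) b := by
  induction b with
  | zero => simp [poch_zero]
  | succ b ih => rw [← Nat.add_assoc, poch_succ, ih, poch_succ]; push_cast; ring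

lemma poch_eq_zero {n k : ℕ} (h : n < k) : poch (-(n:ℂ)) k = 0 := by
  apply Finset.prod_eq_zero (Finset.mem_range.2 h)
  simp

lemma poch_neg_nat {n k : ℕ} (h : k ≤ n) :
    poch (-(n:ℂ)) k = (-1)^k * (n.factorial : ℂ) / ((n-k).factorial : ℂ) := by
  induction k with
  | zero => simp [poch_zero]; rw [div_self (Nat.cast_ne_zero.2 (Nat.factorial_ne_zero _))]
  | succ k ih =>
    have hk : k ≤ n := Nat.le_of_succ_le h
    rw [poch_succ, ih hk]
    have h1 : n - k = (n - (k+1)) + 1 := by omega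
    have h2 : ((n - k).factorial : ℂ) = ((n - (k+1)).factorial : ℂ) * ((n : ℂ) - k) := by
      rw [h1, Nat.factorial_succ]
      have h3 : ((n - (k+1) : ℕ) : ℂ) + 1 = (n:ℂ) - k := by
        push_cast [Nat.cast_sub h]; ring
      push_cast
      rw [← h3]; ring
    rw [h2]
    have hne : ((n - (k+1)).factorial : ℂ) ≠ 0 := Nat.cast_ne_zero.2 (Nat.factorial_ne_zero _)
    have hne2 : ((n:ℂ) - k) ≠ 0 := by
      intro hh
      have : (n:ℂ) = k := by linear_combination hh
      have := Nat.cast_injective (R := ℂ) |>.eq_iff.1 this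
      omega
    field_simp
    ring

lemma poch_ne_zero {z : ℂ} (hz : ∀ m : ℕ, z ≠ -(m:ℂ)) (k : ℕ) : poch z k ≠ 0 := by
  apply Finset.prod_ne_zero_iff.2
  intro i _
  intro h
  exact hz i (by linear_combination h)

open Complex Metric

lemma slit_cond {z : ℂ} (hz : ‖z‖ < 1) : 0 < (1 - z).re ∨ (1 - z).im ≠ 0 := by
  left
  simp only [Complex.sub_re, Complex.one_re, sub_pos]
  calc z.re ≤ |z.re| := le_abs_self _
    _ ≤ ‖z‖ := Complex.abs_re_le_norm z
    _ < 1 := hz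

lemma one_sub_ne_zero {z : ℂ} (hz : ‖z‖ < 1) : (1 : ℂ) - z ≠ 0 := by
  intro h
  have : (1:ℂ) = z := by linear_combination h
  rw [← this] at hz; simp at hz

lemma diff_cpow (γ : ℂ) : DifferentiableOn ℂ (fun w : ℂ => (1 - w) ^ (-γ)) (ball 0 1) := by
  intro z hz
  have hz' : ‖z‖ < 1 := by simpa using hz
  exact (DifferentiableAt.cpow ((differentiable_const (1:ℂ)).sub differentiable_id).differentiableAt
    (differentiableAt_const _) (slit_cond hz')).differentiableWithinAt

lemma iteratedDeriv_cpow (γ : ℂ) (n : ℕ) :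
    ∀ z ∈ ball (0:ℂ) 1, iteratedDeriv n (fun w => (1 - w) ^ (-γ)) z
      = poch γ n * (1 - z) ^ (-γ - n) := by
  induction n with
  | zero => intro z hz; simp [poch_zero]
  | succ n ih =>
    intro z hz
    rw [iteratedDeriv_succ]
    have hcong : (iteratedDeriv n (fun w => (1 - w) ^ (-γ)))
        =ᶠ[nhds z] (fun w => poch γ n * (1 - w) ^ (-γ - n)) := by
      filter_upwards [isOpen_ball.mem_nhds hz] with w hw
      exact ih w hw
    rw [hcong.deriv_eq]
    have hz' : ‖z‖ < 1 := by simpa using hz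
    have hd : HasDerivAt (fun w : ℂ => (1 - w) ^ (-γ - n))
        ((-γ - n) * (1 - z) ^ (-γ - n - 1) * (-1)) z := by
      have h1 : HasDerivAt (fun w : ℂ => 1 - w) (-1 : ℂ) z := by
        simpa using (hasDerivAt_id z).const_sub 1
      exact h1.cpow_const (slit_cond hz')
    rw [(hd.const_mul (poch γ n)).deriv]
    rw [poch_succ]
    have : -γ - ((n : ℂ) + 1) = -γ - n - 1 := by ring
    push_cast
    rw [this]
    ring

lemma hasSum_binomial (γ : ℂ) {s : ℂ} (hs : ‖s‖ < 1) :
    HasSum (fun k : ℕ => poch γ k / (k.factorial : ℂ) * s ^ k) ((1 - s) ^ (-γ)) := by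
  have hmem : s ∈ ball (0:ℂ) 1 := by simpa using hs
  have H := Complex.hasSum_taylorSeries_on_ball (diff_cpow γ) hmem
  have H2 : ∀ n : ℕ, ((n.factorial : ℂ))⁻¹ • (s - 0) ^ n •
      iteratedDeriv n (fun w => (1 - w) ^ (-γ)) 0 = poch γ n / (n.factorial : ℂ) * s ^ n := by
    intro n
    rw [iteratedDeriv_cpow γ n 0 (by simp)]
    simp [smul_eq_mul, Complex.one_cpow]
    ring
  simpa only [funext H2] using H

open Finset

lemma fiber_sum {K : Type*} [Field K] [CharZero K] {d : ℕ} (t : Fin d → K) (k : ℕ) :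
    ∑ m ∈ Finset.piAntidiag Finset.univ k, ∏ j, t j ^ m j / ((m j).factorial : K)
      = (∑ j, t j) ^ k / (k.factorial : K) := by
  rw [Finset.sum_pow_eq_sum_piAntidiag, Finset.sum_div]
  apply Finset.sum_congr rfl
  intro m hm
  have hsum : ∑ j, m j = k := (Finset.mem_piAntidiag.1 hm).1
  have hspec := Nat.multinomial_spec Finset.univ m
  rw [hsum] at hspec
  have h1 : ((Nat.multinomial Finset.univ m : K)) * ∏ j, ((m j).factorial : K)
      = (k.factorial : K) := by
    rw [mul_comm]; exact_mod_cast congrArg (Nat.cast : ℕ → K) hspec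
  rw [Finset.prod_div_distrib]
  have h2 : (∏ j, ((m j).factorial : K)) ≠ 0 :=
    Finset.prod_ne_zero_iff.2 fun j _ => Nat.cast_ne_zero.2 (Nat.factorial_ne_zero _)
  have h3 : (k.factorial : K) ≠ 0 := Nat.cast_ne_zero.2 (Nat.factorial_ne_zero _)
  rw [div_eq_div_iff h2 h3]
  calc (∏ j, t j ^ m j) * (k.factorial : K)
      = (∏ j, t j ^ m j) * (((Nat.multinomial Finset.univ m : K)) * ∏ j, ((m j).factorial : K)) := by
        rw [h1]
    _ = (Nat.multinomial Finset.univ m : K) * (∏ j, t j ^ m j) * ∏ j, ((m j).factorial : K) := by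
        ring

/-- truncation finsets -/
def TT (d N : ℕ) : Finset (Fin d → ℕ) :=
  (Finset.range (N+1)).biUnion (fun k => Finset.piAntidiag Finset.univ k)

lemma mem_TT {d N : ℕ} {m : Fin d → ℕ} : m ∈ TT d N ↔ ∑ j, m j ≤ N := by
  simp only [TT, Finset.mem_biUnion, Finset.mem_range, Finset.mem_piAntidiag]
  constructor
  · rintro ⟨k, hk, hsum, -⟩; have h' : Finset.univ.sum m = ∑ j, m j := rfl; omega
  · intro h; exact ⟨∑ j, m j, by omega, rfl, fun i _ => Finset.mem_univ i⟩

lemma sum_TT {M : Type*} [AddCommMonoid M] {d N : ℕ} (f : (Fin d → ℕ) → M) :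
    ∑ m ∈ TT d N, f m = ∑ k ∈ Finset.range (N+1), ∑ m ∈ Finset.piAntidiag Finset.univ k, f m := by
  apply Finset.sum_biUnion
  intro a _ b _ hab
  simp only [Function.onFun]
  rw [Finset.disjoint_left]
  intro m hma hmb
  exact hab ((Finset.mem_piAntidiag.1 hma).1.symm.trans (Finset.mem_piAntidiag.1 hmb).1)

lemma tendsto_TT (d : ℕ) : Filter.Tendsto (fun N => TT d N) Filter.atTop Filter.atTop := by
  rw [Filter.tendsto_atTop_atTop]
  intro b
  refine ⟨b.sup (fun m => ∑ j, m j), fun a ha => ?_⟩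
  intro m hm
  exact mem_TT.2 (le_trans (Finset.le_sup hm) ha)

lemma summable_b (γ : ℂ) {r : ℝ} (h0 : 0 ≤ r) (hr : r < 1) :
    Summable (fun k : ℕ => ‖poch γ k‖ * r ^ k / (k.factorial : ℝ)) := by
  set r' : ℝ := (1 + r) / 2 with hr'
  have hr'1 : r' < 1 := by rw [hr']; linarith
  have hrr' : r < r' := by rw [hr']; linarith
  apply summable_of_ratio_norm_eventually_le hr'1
  rw [Filter.eventually_atTop]
  refine ⟨⌈(‖γ‖ * r) / (r' - r)⌉₊, fun k hk => ?_⟩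
  have hk' : (‖γ‖ * r) / (r' - r) ≤ k := le_trans (Nat.le_ceil _) (by exact_mod_cast hk)
  have hkey : (‖γ‖ + k) * r ≤ r' * (k + 1) := by
    have h1 : ‖γ‖ * r ≤ (r' - r) * k := by
      rw [div_le_iff₀ (by linarith)] at hk'
      linarith [hk']
    nlinarith [h0, hrr']
  have ha : ‖poch γ (k+1)‖ * r ^ (k+1) / ((k+1).factorial : ℝ)
      = (‖poch γ k‖ * r ^ k / (k.factorial : ℝ)) * (‖γ + k‖ * r / (k + 1)) := by
    rw [poch_succ, norm_mul, pow_succ, Nat.factorial_succ]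
    push_cast
    field_simp
  have hnn : (0:ℝ) ≤ ‖poch γ k‖ * r ^ k / (k.factorial : ℝ) := by positivity
  rw [Real.norm_of_nonneg (by positivity), Real.norm_of_nonneg hnn, ha]
  have hb : ‖γ + (k:ℂ)‖ * r / (k + 1) ≤ r' := by
    rw [div_le_iff₀ (by positivity)]
    calc ‖γ + (k:ℂ)‖ * r ≤ (‖γ‖ + k) * r := by
          apply mul_le_mul_of_nonneg_right _ h0
          calc ‖γ + (k:ℂ)‖ ≤ ‖γ‖ + ‖(k:ℂ)‖ := norm_add_le _ _
            _ = ‖γ‖ + k := by simp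
      _ ≤ r' * (k + 1) := hkey
  calc (‖poch γ k‖ * r ^ k / (k.factorial:ℝ)) * (‖γ + (k:ℂ)‖ * r / (k + 1))
      ≤ (‖poch γ k‖ * r ^ k / (k.factorial:ℝ)) * r' := mul_le_mul_of_nonneg_left hb hnn
    _ = r' * (‖poch γ k‖ * r ^ k / (k.factorial:ℝ)) := mul_comm _ _

variable {d : ℕ}

lemma norm_F (γ : ℂ) (t : Fin d → ℂ) (m : Fin d → ℕ) :
    ‖poch γ (∑ j, m j) * ∏ j, t j ^ m j / ((m j).factorial : ℂ)‖
      = ‖poch γ (∑ j, m j)‖ * ∏ j, ‖t j‖ ^ m j / ((m j).factorial : ℝ) := by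
  rw [norm_mul, norm_prod]
  congr 1
  apply Finset.prod_congr rfl
  intro j _
  rw [norm_div, norm_pow]
  congr 1
  simp

lemma fiber_sum_norm (γ : ℂ) (t : Fin d → ℂ) (k : ℕ) :
    ∑ m ∈ Finset.piAntidiag Finset.univ k,
        ‖poch γ (∑ j, m j) * ∏ j, t j ^ m j / ((m j).factorial : ℂ)‖
      = ‖poch γ k‖ * (∑ j, ‖t j‖) ^ k / (k.factorial : ℝ) := by
  rw [mul_div_assoc, ← fiber_sum (fun j => ‖t j‖) k, Finset.mul_sum]
  apply Finset.sum_congr rfl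
  intro m hm
  rw [norm_F, (Finset.mem_piAntidiag.1 hm).1]

lemma summable_F (γ : ℂ) {t : Fin d → ℂ} (h : ∑ j, ‖t j‖ < 1) :
    Summable (fun m : Fin d → ℕ => poch γ (∑ j, m j) * ∏ j, t j ^ m j / ((m j).factorial : ℂ)) := by
  have h0 : (0:ℝ) ≤ ∑ j, ‖t j‖ := Finset.sum_nonneg fun j _ => norm_nonneg _
  have hb := summable_b γ h0 h
  apply Summable.of_norm
  apply summable_of_sum_le (fun m => norm_nonneg _)
  intro u
  set N := u.sup (fun m => ∑ j, m j) with hN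
  calc ∑ m ∈ u, ‖poch γ (∑ j, m j) * ∏ j, t j ^ m j / ((m j).factorial : ℂ)‖
      ≤ ∑ m ∈ TT d N, ‖poch γ (∑ j, m j) * ∏ j, t j ^ m j / ((m j).factorial : ℂ)‖ := by
        apply Finset.sum_le_sum_of_subset_of_nonneg
        · intro m hm; exact mem_TT.2 (Finset.le_sup hm)
        · intro m _ _; exact norm_nonneg _
    _ = ∑ k ∈ Finset.range (N+1), ‖poch γ k‖ * (∑ j, ‖t j‖) ^ k / (k.factorial : ℝ) := by
        rw [sum_TT]
        exact Finset.sum_congr rfl fun k _ => fiber_sum_norm γ t k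
    _ ≤ ∑' k, ‖poch γ k‖ * (∑ j, ‖t j‖) ^ k / (k.factorial : ℝ) := by
        apply Summable.sum_le_tsum _ _ hb
        intro k _
        positivity

lemma hasSum_F (γ : ℂ) {t : Fin d → ℂ} (h : ∑ j, ‖t j‖ < 1) :
    HasSum (fun m : Fin d → ℕ => poch γ (∑ j, m j) * ∏ j, t j ^ m j / ((m j).factorial : ℂ))
      ((1 - ∑ j, t j) ^ (-γ)) := by
  set F := fun m : Fin d → ℕ => poch γ (∑ j, m j) * ∏ j, t j ^ m j / ((m j).factorial : ℂ) with hF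
  have hsum : Summable F := summable_F γ h
  have hHS : HasSum F (∑' m, F m) := hsum.hasSum
  have htend : Filter.Tendsto (fun N => ∑ m ∈ TT d N, F m) Filter.atTop (nhds (∑' m, F m)) :=
    hHS.comp (tendsto_TT d)
  have hs1 : ‖∑ j, t j‖ < 1 := lt_of_le_of_lt (norm_sum_le _ _) h
  have hbin := hasSum_binomial γ hs1
  have heq : ∀ N, ∑ m ∈ TT d N, F m
      = ∑ k ∈ Finset.range (N+1), poch γ k / (k.factorial : ℂ) * (∑ j, t j) ^ k := by
    intro N
    rw [sum_TT]
    apply Finset.sum_congr rfl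
    intro k _
    have : ∀ m ∈ Finset.piAntidiag Finset.univ k, F m
        = poch γ k * ∏ j, t j ^ m j / ((m j).factorial : ℂ) := by
      intro m hm
      rw [hF]
      simp only
      rw [(Finset.mem_piAntidiag.1 hm).1]
    rw [Finset.sum_congr rfl this, ← Finset.mul_sum, fiber_sum]
    ring
  have htend2 : Filter.Tendsto (fun N => ∑ m ∈ TT d N, F m) Filter.atTop
      (nhds ((1 - ∑ j, t j) ^ (-γ))) := by
    simp only [funext heq]
    have h1 := hbin.tendsto_sum_nat
    have h2 : Filter.Tendsto (fun N : ℕ => N + 1) Filter.atTop Filter.atTop :=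
      Filter.tendsto_add_atTop_nat 1
    exact h1.comp h2
  rwa [tendsto_nhds_unique htend htend2] at hHS

lemma poch_neg_nat' {n k : ℕ} (h : k ≤ n) :
    poch (-(n:ℂ)) k * (-1:ℂ)^k = (n.factorial : ℂ) / ((n-k).factorial : ℂ) := by
  rw [poch_neg_nat h]
  have hsq : ((-1:ℂ))^k * (-1:ℂ)^k = 1 := by
    rw [← pow_add, ← two_mul, pow_mul]; norm_num
  have h1 : ((n-k).factorial : ℂ) ≠ 0 := Nat.cast_ne_zero.2 (Nat.factorial_ne_zero _)
  field_simp
  linear_combination (n.factorial:ℂ) * hsq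

lemma row_identity (d : ℕ) (y : ℕ) (w : ℂ) (v : Fin d → ℂ) :
    ∑ a ∈ Fintype.piFinset (fun _ : Fin d => Finset.range (y+1)),
      poch (-(y:ℂ)) (∑ j, a j) * (-1:ℂ)^(∑ j, a j) * w^(y - ∑ j, a j) *
        ∏ j, v j ^ a j / ((a j).factorial : ℂ)
    = (w + ∑ j, v j) ^ y := by
  set f : (Fin d → ℕ) → ℂ := fun a =>
    poch (-(y:ℂ)) (∑ j, a j) * (-1:ℂ)^(∑ j, a j) * w^(y - ∑ j, a j) *
      ∏ j, v j ^ a j / ((a j).factorial : ℂ) with hf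
  have hsub : TT d y ⊆ Fintype.piFinset (fun _ : Fin d => Finset.range (y+1)) := by
    intro a ha
    rw [Fintype.mem_piFinset]
    intro j
    rw [Finset.mem_range]
    have := mem_TT.1 ha
    have : a j ≤ ∑ i, a i := Finset.single_le_sum (fun i _ => Nat.zero_le _) (Finset.mem_univ j)
    omega
  have hzero : ∀ a ∈ Fintype.piFinset (fun _ : Fin d => Finset.range (y+1)), a ∉ TT d y →
      f a = 0 := by
    intro a _ ha
    have : y < ∑ j, a j := by by_contra hc; exact ha (mem_TT.2 (by omega))
    rw [hf]
    simp only
    rw [poch_eq_zero this]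
    ring
  rw [← Finset.sum_subset hsub hzero, sum_TT]
  rw [add_comm w, add_pow]
  apply Finset.sum_congr rfl
  intro k hk
  have hky : k ≤ y := by rw [Finset.mem_range] at hk; omega
  have hconst : ∀ a ∈ Finset.piAntidiag Finset.univ k, f a
      = (poch (-(y:ℂ)) k * (-1:ℂ)^k * w^(y-k)) * ∏ j, v j ^ a j / ((a j).factorial : ℂ) := by
    intro a ha
    rw [hf]
    simp only
    rw [(Finset.mem_piAntidiag.1 ha).1]
  rw [Finset.sum_congr rfl hconst, ← Finset.mul_sum, fiber_sum, poch_neg_nat' hky]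
  have h1 : ((y-k).factorial : ℂ) ≠ 0 := Nat.cast_ne_zero.2 (Nat.factorial_ne_zero _)
  have h2 : ((k).factorial : ℂ) ≠ 0 := Nat.cast_ne_zero.2 (Nat.factorial_ne_zero _)
  have h3 : (Nat.choose y k : ℂ) * k.factorial * (y-k).factorial = y.factorial := by
    exact_mod_cast congrArg (Nat.cast : ℕ → ℂ) (Nat.choose_mul_factorial_mul_factorial hky)
  field_simp
  linear_combination (-(w^(y-k) * (∑ j, v j)^k)) * h3

/-- Griffiths' multivariate Meixner polynomial `M_n(x;U,β)` as a Gelfand–Aomoto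
hypergeometric series; the sum over matrices `A` with entries in `ℕ` is in fact finite
since `(-n_j)_k = 0` for `k > n_j`. -/
noncomputable def Meixner {d : ℕ} (U : Matrix (Fin d) (Fin d) ℂ) (β : ℂ)
    (n x : Fin d → ℕ) : ℂ :=
  ∑' A : Matrix (Fin d) (Fin d) ℕ,
    ((∏ j, poch (-(n j : ℂ)) (∑ i, A i j)) * (∏ i, poch (-(x i : ℂ)) (∑ j, A i j)) /
        poch β (∑ i, ∑ j, A i j)) *
      ∏ i, ∏ j, (1 - U i j) ^ (A i j) / ((A i j).factorial : ℂ)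

set_option maxHeartbeats 1000000

/-- The multivariate Meixner polynomials defined by the above hypergeometric series are
exactly the coefficients in Griffiths' generating function:
`(1-∑_j t_j)^{-β-|x|} ∏_i (1-∑_j U_{i,j}t_j)^{x_i} = ∑_n (β)_{|n|}/n! M_n(x;U,β) tⁿ`
for `t` sufficiently close to `0`. -/
theorem stmt15 (d : ℕ) (U : Matrix (Fin d) (Fin d) ℂ) (β : ℂ)
    (hβ : ∀ k : ℕ, β ≠ -(k : ℂ)) (x : Fin d → ℕ) :
    ∃ ε > 0, ∀ t : Fin d → ℂ, (∀ i, ‖t i‖ < ε) →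
      HasSum (fun n : Fin d → ℕ =>
          poch β (∑ i, n i) / (∏ i, ((n i).factorial : ℂ)) * Meixner U β n x *
            ∏ i, t i ^ n i)
        ((1 - ∑ j, t j) ^ (-β - (∑ i, (x i : ℂ))) *
          ∏ i, (1 - ∑ j, U i j * t j) ^ (x i)) := by
  refine ⟨1 / (d + 1 : ℝ), by positivity, fun t ht => ?_⟩
  -- basic estimates
  have hr : ∑ j, ‖t j‖ < 1 := by
    calc ∑ j, ‖t j‖ ≤ ∑ _j : Fin d, 1 / (d + 1 : ℝ) :=
          Finset.sum_le_sum fun j _ => (ht j).le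
      _ = d * (1 / (d + 1 : ℝ)) := by simp [mul_comm]
      _ < 1 := by rw [mul_one_div, div_lt_one (by positivity)]; linarith
  have hs1 : ‖∑ j, t j‖ < 1 := lt_of_le_of_lt (norm_sum_le _ _) hr
  have h1s : (1 : ℂ) - ∑ j, t j ≠ 0 := one_sub_ne_zero hs1
  -- the finite support of the Meixner sum
  set S : Finset (Matrix (Fin d) (Fin d) ℕ) :=
    Fintype.piFinset (fun i => Fintype.piFinset (fun _ => Finset.range (x i + 1))) with hS
  set term : Matrix (Fin d) (Fin d) ℕ → (Fin d → ℕ) → ℂ := fun A n =>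
    ((∏ j, poch (-(n j : ℂ)) (∑ i, A i j)) * (∏ i, poch (-(x i : ℂ)) (∑ j, A i j)) /
        poch β (∑ i, ∑ j, A i j)) *
      ∏ i, ∏ j, (1 - U i j) ^ (A i j) / ((A i j).factorial : ℂ) with hterm
  have hMeix : ∀ n, Meixner U β n x = ∑ A ∈ S, term A n := by
    intro n
    apply tsum_eq_sum
    intro A hA
    have : ∃ i j, x i < A i j := by
      by_contra hc
      push_neg at hc
      apply hA
      rw [hS]; refine Fintype.mem_piFinset.2 ?_
      intro i
      rw [Fintype.mem_piFinset]
      intro j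
      rw [Finset.mem_range]
      exact Nat.lt_succ_of_le (hc i j)
    obtain ⟨i, j, hij⟩ := this
    have hle : A i j ≤ ∑ j', A i j' :=
      Finset.single_le_sum (fun j' _ => Nat.zero_le _) (Finset.mem_univ j)
    have hz : poch (-(x i : ℂ)) (∑ j', A i j') = 0 := poch_eq_zero (by omega)
    have : (∏ i', poch (-(x i' : ℂ)) (∑ j', A i' j')) = 0 :=
      Finset.prod_eq_zero (Finset.mem_univ i) hz
    rw [this]
    ring
  set g : Matrix (Fin d) (Fin d) ℕ → (Fin d → ℕ) → ℂ := fun A n =>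
    poch β (∑ i, n i) / (∏ i, ((n i).factorial : ℂ)) * term A n * ∏ i, t i ^ n i with hg
  set v : Matrix (Fin d) (Fin d) ℕ → ℂ := fun A =>
    ((-1:ℂ)^(∑ i, ∑ j, A i j) * (∏ i, poch (-(x i : ℂ)) (∑ j, A i j)) *
      (∏ i, ∏ j, (1 - U i j) ^ (A i j) / ((A i j).factorial : ℂ)) *
      ∏ j, t j ^ (∑ i, A i j)) *
      (1 - ∑ j, t j) ^ (-(β + (∑ i, ∑ j, A i j : ℕ))) with hv
  have hgsum : ∀ A, HasSum (g A) (v A) := by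
    intro A
    have hccA : ∑ j, ∑ i, A i j = ∑ i, ∑ j, A i j := Finset.sum_comm
    set shift : (Fin d → ℕ) → (Fin d → ℕ) := fun m j => m j + ∑ i, A i j with hshift
    have hinj : Function.Injective shift := by
      intro m m' h
      funext j
      have := congrFun h j
      simp only [hshift] at this
      omega
    have hzero : ∀ n, n ∉ Set.range shift → g A n = 0 := by
      intro n hn
      have hex : ∃ j, n j < ∑ i, A i j := by
        by_contra hcon
        push_neg at hcon
        refine hn ⟨fun j => n j - ∑ i, A i j, funext fun j => ?_⟩
        simp only [hshift]
        have := hcon j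
        omega
      obtain ⟨j, hj⟩ := hex
      have hz2 : (∏ j', poch (-(n j' : ℂ)) (∑ i, A i j')) = 0 :=
        Finset.prod_eq_zero (Finset.mem_univ j) (poch_eq_zero hj)
      simp only [hg, hterm]
      rw [hz2]
      ring
    have hP : poch β (∑ i, ∑ j, A i j) ≠ 0 := poch_ne_zero hβ _
    have hgm : ∀ m : Fin d → ℕ, g A (shift m)
        = ((-1:ℂ)^(∑ i, ∑ j, A i j) * (∏ i, poch (-(x i : ℂ)) (∑ j, A i j)) *
            (∏ i, ∏ j, (1 - U i j) ^ (A i j) / ((A i j).factorial : ℂ)) *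
            ∏ j, t j ^ (∑ i, A i j)) *
          (poch (β + (∑ i, ∑ j, A i j : ℕ)) (∑ j, m j) *
            ∏ j, t j ^ m j / ((m j).factorial : ℂ)) := by
      intro m
      simp only [hg, hterm, hshift]
      have e1 : ∑ i, (m i + ∑ i', A i' i) = (∑ i, ∑ j, A i j) + ∑ i, m i := by
        rw [Finset.sum_add_distrib, hccA.symm]
        omega
      have e3 : ∀ j : Fin d, poch (-((m j + ∑ i, A i j : ℕ) : ℂ)) (∑ i, A i j)
          = (-1:ℂ)^(∑ i, A i j) * (((m j + ∑ i, A i j).factorial : ℂ))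
              / (((m j).factorial : ℂ)) := by
        intro j
        have h := poch_neg_nat (Nat.le_add_left (∑ i, A i j) (m j))
        rwa [Nat.add_sub_cancel] at h
      have e4 : (∏ j, poch (-((m j + ∑ i, A i j : ℕ) : ℂ)) (∑ i, A i j))
          = (-1:ℂ)^(∑ i, ∑ j, A i j) *
            ((∏ j, ((m j + ∑ i, A i j).factorial : ℂ)) / ∏ j, ((m j).factorial : ℂ)) := by
        rw [Finset.prod_congr rfl (fun j _ => e3 j)]
        rw [Finset.prod_div_distrib, Finset.prod_mul_distrib, Finset.prod_pow_eq_pow_sum,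
          hccA, mul_div_assoc]
      have e5 : (∏ i, t i ^ (m i + ∑ i', A i' i))
          = (∏ i, t i ^ m i) * ∏ i, t i ^ (∑ i', A i' i) := by
        simp [pow_add, Finset.prod_mul_distrib]
      have e6 : (∏ j, t j ^ m j / ((m j).factorial : ℂ))
          = (∏ j, t j ^ m j) / ∏ j, ((m j).factorial : ℂ) := Finset.prod_div_distrib _ _
      rw [e1, poch_add, e4, e5, e6]
      have hFn : (∏ j, ((m j + ∑ i, A i j).factorial : ℂ)) ≠ 0 :=
        Finset.prod_ne_zero_iff.2 fun j _ => Nat.cast_ne_zero.2 (Nat.factorial_ne_zero _)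
      have hFm : (∏ j, ((m j).factorial : ℂ)) ≠ 0 :=
        Finset.prod_ne_zero_iff.2 fun j _ => Nat.cast_ne_zero.2 (Nat.factorial_ne_zero _)
      field_simp
    have hhs : HasSum (g A ∘ shift)
        (((-1:ℂ)^(∑ i, ∑ j, A i j) * (∏ i, poch (-(x i : ℂ)) (∑ j, A i j)) *
            (∏ i, ∏ j, (1 - U i j) ^ (A i j) / ((A i j).factorial : ℂ)) *
            ∏ j, t j ^ (∑ i, A i j)) *
          (1 - ∑ j, t j) ^ (-(β + (∑ i, ∑ j, A i j : ℕ)))) := by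
      have h2 := (hasSum_F (β + (∑ i, ∑ j, A i j : ℕ)) hr).mul_left
        ((-1:ℂ)^(∑ i, ∑ j, A i j) * (∏ i, poch (-(x i : ℂ)) (∑ j, A i j)) *
            (∏ i, ∏ j, (1 - U i j) ^ (A i j) / ((A i j).factorial : ℂ)) *
            ∏ j, t j ^ (∑ i, A i j))
      have hfe : g A ∘ shift = fun m =>
          ((-1:ℂ)^(∑ i, ∑ j, A i j) * (∏ i, poch (-(x i : ℂ)) (∑ j, A i j)) *
            (∏ i, ∏ j, (1 - U i j) ^ (A i j) / ((A i j).factorial : ℂ)) *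
            ∏ j, t j ^ (∑ i, A i j)) *
          (poch (β + (∑ i, ∑ j, A i j : ℕ)) (∑ j, m j) *
            ∏ j, t j ^ m j / ((m j).factorial : ℂ)) := funext hgm
      rw [hfe]
      exact h2
    have := (hinj.hasSum_iff hzero).1 hhs
    simp only [hv]
    exact this
  have hfin : HasSum (fun n => ∑ A ∈ S, g A n) (∑ A ∈ S, v A) :=
    hasSum_sum fun A _ => hgsum A
  have hfun : (fun n : Fin d → ℕ =>
      poch β (∑ i, n i) / (∏ i, ((n i).factorial : ℂ)) * Meixner U β n x * ∏ i, t i ^ n i)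
      = fun n => ∑ A ∈ S, g A n := by
    funext n
    rw [hMeix n, Finset.mul_sum, Finset.sum_mul]
  have hval : ∑ A ∈ S, v A
      = (1 - ∑ j, t j) ^ (-β - (∑ i, (x i : ℂ))) * ∏ i, (1 - ∑ j, U i j * t j) ^ (x i) := by
    have hrow : ∀ i : Fin d,
        ∑ a ∈ Fintype.piFinset (fun _ : Fin d => Finset.range (x i + 1)),
          poch (-(x i:ℂ)) (∑ j, a j) * (-1:ℂ)^(∑ j, a j) *
            (1 - ∑ j, t j)^(x i - ∑ j, a j) *
            ∏ j, ((1 - U i j) * t j) ^ a j / ((a j).factorial : ℂ)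
        = (1 - ∑ j, U i j * t j) ^ (x i) := by
      intro i
      rw [row_identity d (x i) (1 - ∑ j, t j) (fun j => (1 - U i j) * t j)]
      congr 1
      have : ∑ j, (1 - U i j) * t j = (∑ j, t j) - ∑ j, U i j * t j := by
        rw [← Finset.sum_sub_distrib]
        exact Finset.sum_congr rfl fun j _ => by ring
      rw [this]
      ring
    have hA : ∀ A ∈ S, v A = (1 - ∑ j, t j) ^ (-β - (∑ i, (x i : ℂ))) *
        ∏ i, (poch (-(x i:ℂ)) (∑ j, A i j) * (-1:ℂ)^(∑ j, A i j) *
          (1 - ∑ j, t j)^(x i - ∑ j, A i j) *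
          ∏ j, ((1 - U i j) * t j) ^ (A i j) / ((A i j).factorial : ℂ)) := by
      intro A _
      by_cases hcase : ∀ i, ∑ j, A i j ≤ x i
      · -- main case
        have h1 : ∀ i : Fin d, poch (-(x i:ℂ)) (∑ j, A i j) * (-1:ℂ)^(∑ j, A i j) *
              (1 - ∑ j, t j)^(x i - ∑ j, A i j) *
              ∏ j, ((1 - U i j) * t j) ^ (A i j) / ((A i j).factorial : ℂ)
            = poch (-(x i:ℂ)) (∑ j, A i j) * ((-1:ℂ)^(∑ j, A i j) *
              ((1 - ∑ j, t j)^(x i - ∑ j, A i j) *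
              ((∏ j, (1 - U i j) ^ (A i j) / ((A i j).factorial : ℂ)) * ∏ j, t j ^ (A i j)))) := by
          intro i
          have hj : (∏ j, ((1 - U i j) * t j) ^ (A i j) / ((A i j).factorial : ℂ))
              = (∏ j, (1 - U i j) ^ (A i j) / ((A i j).factorial : ℂ)) * ∏ j, t j ^ (A i j) := by
            rw [← Finset.prod_mul_distrib]
            apply Finset.prod_congr rfl
            intro j _
            rw [mul_pow]
            ring
          rw [hj]
          ring
        rw [Finset.prod_congr rfl (fun i _ => h1 i)]
        simp only [Finset.prod_mul_distrib]
        have e1 : (∏ i, (-1:ℂ)^(∑ j, A i j)) = (-1:ℂ)^(∑ i, ∑ j, A i j) :=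
          Finset.prod_pow_eq_pow_sum _ _ _
        have e2 : (∏ i, (1 - ∑ j, t j)^(x i - ∑ j, A i j))
            = (1 - ∑ j, t j)^(∑ i, (x i - ∑ j, A i j)) :=
          Finset.prod_pow_eq_pow_sum _ _ _
        rw [e1, e2]
        have hTc : (∏ i, ∏ j, t j ^ (A i j)) = ∏ j, t j ^ (∑ i, A i j) := by
          rw [Finset.prod_comm]
          exact Finset.prod_congr rfl fun j _ => (Finset.prod_pow_eq_pow_sum _ _ _)
        rw [hTc]
        have hNc : ((∑ i, (x i - ∑ j, A i j) : ℕ) : ℂ)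
            = (∑ i, (x i:ℂ)) - ((∑ i, ∑ j, A i j : ℕ) : ℂ) := by
          rw [Nat.cast_sum]
          rw [Finset.sum_congr rfl (fun i (_ : i ∈ Finset.univ) => Nat.cast_sub (hcase i))]
          rw [Finset.sum_sub_distrib]
          push_cast
          ring
        have hexp : -(β + ((∑ i, ∑ j, A i j : ℕ) : ℂ))
            = (-β - (∑ i, (x i : ℂ))) + ((∑ i, (x i - ∑ j, A i j) : ℕ) : ℂ) := by
          rw [hNc]; ring
        rw [hv]
        simp only
        rw [hexp, Complex.cpow_add _ _ h1s, Complex.cpow_natCast]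
        ring
      · -- degenerate case : both sides vanish
        push_neg at hcase
        obtain ⟨i, hi⟩ := hcase
        have hz : poch (-(x i:ℂ)) (∑ j, A i j) = 0 := poch_eq_zero hi
        have hL : (∏ i, poch (-(x i : ℂ)) (∑ j, A i j)) = 0 :=
          Finset.prod_eq_zero (Finset.mem_univ i) hz
        have hR : (∏ i, (poch (-(x i:ℂ)) (∑ j, A i j) * (-1:ℂ)^(∑ j, A i j) *
            (1 - ∑ j, t j)^(x i - ∑ j, A i j) *
            ∏ j, ((1 - U i j) * t j) ^ (A i j) / ((A i j).factorial : ℂ))) = 0 :=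
          Finset.prod_eq_zero (Finset.mem_univ i) (by rw [hz]; ring)
        rw [hv]
        simp only
        rw [hL, hR]
        ring
    rw [Finset.sum_congr rfl hA, ← Finset.mul_sum]
    congr 1
    refine Eq.trans ?_ (Finset.prod_congr rfl fun i _ => hrow i)
    exact (Finset.prod_univ_sum
      (fun i : Fin d => Fintype.piFinset (fun _ : Fin d => Finset.range (x i + 1)))
      (fun i a => poch (-(x i:ℂ)) (∑ j, a j) * (-1:ℂ)^(∑ j, a j) *
          (1 - ∑ j, t j)^(x i - ∑ j, a j) *
          ∏ j, ((1 - U i j) * t j) ^ a j / ((a j).factorial : ℂ))).symm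
  rw [hfun, ← hval]
  exact hfin
end

section
/- Let N ≥ 2, let σ₁,...,σ_N be positive reals with σ = σ₁+⋯+σ_N, and let U ∈ M_d(ℂ). Then the multivariate Meixner polynomials satisfy the convolution identity ((σ)_{|m|}/m!) M_m(n; U, σ) = ∑_{m₁+⋯+m_N = m} ∏_{i=1}^N ((σ_i)_{|m_i|}/m_i!) M_{m_i}(n_i; U, σ_i), where n₁,...,n_N ∈ ℕ₀ᵈ are arbitrary with n = n₁+⋯+n_N and the sum is over all decompositions m₁+⋯+m_N = m with m_i ∈ ℕ₀ᵈ. -/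
set_option linter.unusedSectionVars false
set_option maxHeartbeats 1000000
lemma poch_neg_nat_eq_zero {n k : ℕ} (h : n < k) : poch (-(n : ℂ)) k = 0 := by
  apply Finset.prod_eq_zero (Finset.mem_range.2 h)
  simp

lemma poch_ne_zero_of_pos {x : ℝ} (hx : 0 < x) (k : ℕ) : poch (x : ℂ) k ≠ 0 := by
  apply Finset.prod_ne_zero_iff.2
  intro i _
  intro h
  have h2 := congrArg Complex.re h
  simp [Complex.add_re] at h2
  have : (0:ℝ) ≤ (i:ℝ) := Nat.cast_nonneg i
  linarith

lemma poch_neg_fac (a b : ℕ) :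
    poch (-((a + b : ℕ) : ℂ)) a * (b.factorial : ℂ) = (-1) ^ a * ((a + b).factorial : ℂ) := by
  induction a generalizing b with
  | zero => simp [poch_zero]
  | succ a ih =>
    have h1 : poch (-((a + 1 + b : ℕ) : ℂ)) (a + 1)
        = poch (-((a + (b+1) : ℕ) : ℂ)) a * (-((b+1 : ℕ) : ℂ)) := by
      rw [poch_succ]
      congr 1
      · congr 2; push_cast; ring
      · push_cast; ring
    rw [h1]
    have := ih (b+1)
    calc poch (-((a + (b+1) : ℕ) : ℂ)) a * (-((b+1 : ℕ) : ℂ)) * (b.factorial : ℂ)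
        = -(poch (-((a + (b+1) : ℕ) : ℂ)) a * ((b+1).factorial : ℂ)) := by
          push_cast [Nat.factorial_succ]; ring
      _ = -((-1)^a * ((a + (b+1)).factorial : ℂ)) := by rw [this]
      _ = (-1)^(a+1) * ((a+1+b).factorial : ℂ) := by
          have : a + (b+1) = a + 1 + b := by ring
          rw [this]; ring

/-- splits of the vector `k` into an `ι`-indexed family -/
noncomputable def Sset (ι : Type) [Fintype ι] [DecidableEq ι] {d : ℕ} (k : Fin d → ℕ) :
    Finset (ι → Fin d → ℕ) :=
  (Fintype.piFinset fun _ : ι => Fintype.piFinset fun j => Finset.range (k j + 1)).filter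
    (fun q => ∑ i, q i = k)

lemma mem_Sset {ι : Type} [Fintype ι] [DecidableEq ι] {d : ℕ} {k : Fin d → ℕ}
    {q : ι → Fin d → ℕ} : q ∈ Sset ι k ↔ ∑ i, q i = k := by
  constructor
  · intro h; exact (Finset.mem_filter.1 h).2
  · intro h
    refine Finset.mem_filter.2 ⟨?_, h⟩
    rw [Fintype.mem_piFinset]
    intro i
    rw [Fintype.mem_piFinset]
    intro j
    rw [Finset.mem_range, Nat.lt_succ_iff]
    calc q i j ≤ ∑ i', q i' j :=
          Finset.single_le_sum (f := fun i' => q i' j) (fun _ _ => Nat.zero_le _)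
            (Finset.mem_univ i)
      _ = (∑ i', q i') j := by rw [Finset.sum_apply]
      _ = k j := by rw [h]

lemma col_Sset {ι : Type} [Fintype ι] [DecidableEq ι] {d : ℕ} {k : Fin d → ℕ}
    {q : ι → Fin d → ℕ} (h : q ∈ Sset ι k) (j : Fin d) : ∑ l, q l j = k j := by
  calc ∑ l, q l j = (∑ l, q l) j := (Finset.sum_apply _ _ _).symm
    _ = k j := by rw [mem_Sset.1 h]

lemma fac_ne_zero (g : ℕ) : ((g.factorial : ℂ)) ≠ 0 := by
  exact_mod_cast g.factorial_ne_zero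

lemma fac_prod_ne_zero {α : Type*} [Fintype α] (g : α → ℕ) :
    (∏ j, ((g j).factorial : ℂ)) ≠ 0 :=
  Finset.prod_ne_zero_iff.2 fun j _ => fac_ne_zero (g j)

section bump
variable {ι : Type} [Fintype ι] [DecidableEq ι] {d : ℕ}

/-- replace the `(i,j0)` entry of `x` by `v` -/
def bump (x : ι → Fin d → ℕ) (i : ι) (j0 : Fin d) (v : ℕ) : ι → Fin d → ℕ :=
  Function.update x i (Function.update (x i) j0 v)

lemma bump_apply (x : ι → Fin d → ℕ) (i : ι) (j0 : Fin d) (v : ℕ) (l : ι) (j : Fin d) :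
    bump x i j0 v l j = if l = i then (if j = j0 then v else x l j) else x l j := by
  unfold bump
  by_cases hl : l = i
  · subst hl; simp [Function.update_apply]
  · simp [Function.update_apply, hl]

lemma bump_row_ne (x : ι → Fin d → ℕ) (i : ι) (j0 : Fin d) (v : ℕ) {l : ι} (hl : l ≠ i) :
    bump x i j0 v l = x l := by
  funext j; rw [bump_apply]; simp [hl]

lemma bump_entry (x : ι → Fin d → ℕ) (i : ι) (j0 : Fin d) (v : ℕ) :
    bump x i j0 v i j0 = v := by rw [bump_apply]; simp

lemma bump_bump (x : ι → Fin d → ℕ) (i : ι) (j0 : Fin d) (v : ℕ) :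
    bump (bump x i j0 v) i j0 (x i j0) = x := by
  funext l j
  rw [bump_apply]
  by_cases hl : l = i
  · subst hl
    by_cases hj : j = j0
    · subst hj; simp
    · simp [hj, bump_apply]
  · simp [hl, bump_apply]

lemma sum_bump_col (x : ι → Fin d → ℕ) (i : ι) (j0 : Fin d) (v : ℕ) (j : Fin d) :
    (∑ l, bump x i j0 v l j) + x i j = (∑ l, x l j) + (if j = j0 then v else x i j) := by
  have h1 : ∑ l, bump x i j0 v l j
      = (if j = j0 then v else x i j) + ∑ l ∈ Finset.univ.erase i, x l j := by
    rw [← Finset.add_sum_erase _ (fun l => bump x i j0 v l j) (Finset.mem_univ i)]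
    congr 1
    · rw [bump_apply]; simp
    · apply Finset.sum_congr rfl; intro l hl
      rw [bump_apply]; simp [Finset.ne_of_mem_erase hl]
  have h2 : ∑ l, x l j = x i j + ∑ l ∈ Finset.univ.erase i, x l j :=
    (Finset.add_sum_erase _ (fun l => x l j) (Finset.mem_univ i)).symm
  rw [h1, h2]; ring

lemma sum_bump_row (x : ι → Fin d → ℕ) (i : ι) (j0 : Fin d) (v : ℕ) :
    (∑ j, bump x i j0 v i j) + x i j0 = (∑ j, x i j) + v := by
  have h1 : ∑ j, bump x i j0 v i j = v + ∑ j ∈ Finset.univ.erase j0, x i j := by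
    rw [← Finset.add_sum_erase _ (fun j => bump x i j0 v i j) (Finset.mem_univ j0)]
    congr 1
    · exact bump_entry x i j0 v
    · apply Finset.sum_congr rfl; intro j hj
      rw [bump_apply]; simp [Finset.ne_of_mem_erase hj]
  have h2 : ∑ j, x i j = x i j0 + ∑ j ∈ Finset.univ.erase j0, x i j :=
    (Finset.add_sum_erase _ (fun j => x i j) (Finset.mem_univ j0)).symm
  rw [h1, h2]; ring

lemma prod_fac_bump_row (x : ι → Fin d → ℕ) (i : ι) (j0 : Fin d) (v : ℕ) :
    ∏ j, ((bump x i j0 v i j).factorial : ℂ)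
      = (v.factorial : ℂ) * ∏ j ∈ Finset.univ.erase j0, ((x i j).factorial : ℂ) := by
  rw [← Finset.mul_prod_erase _ (fun j => ((bump x i j0 v i j).factorial : ℂ))
    (Finset.mem_univ j0)]
  congr 1
  · rw [bump_entry]
  · apply Finset.prod_congr rfl; intro j hj
    rw [bump_apply]; simp [Finset.ne_of_mem_erase hj]

end bump

lemma VV {ι : Type} [Fintype ι] [DecidableEq ι] {d : ℕ} (β : ι → ℂ) (k : Fin d → ℕ) :
    ∑ q ∈ Sset ι k, ∏ i, (poch (β i) (∑ j, q i j) / ∏ j, ((q i j).factorial : ℂ))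
      = poch (∑ i, β i) (∑ j, k j) / ∏ j, ((k j).factorial : ℂ) := by
  suffices H : ∀ n (k : Fin d → ℕ), ∑ j, k j = n →
      ∑ q ∈ Sset ι k, ∏ i, (poch (β i) (∑ j, q i j) / ∏ j, ((q i j).factorial : ℂ))
      = poch (∑ i, β i) (∑ j, k j) / ∏ j, ((k j).factorial : ℂ) by
    exact H _ k rfl
  intro n
  induction n with
  | zero =>
    intro k hk
    have hk0 : ∀ j, k j = 0 := by
      intro j
      exact (Finset.sum_eq_zero_iff.1 hk) j (Finset.mem_univ j)
    have hS : Sset ι k = {fun _ _ => (0:ℕ)} := by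
      ext q
      rw [mem_Sset, Finset.mem_singleton]
      constructor
      · intro h
        funext i j
        have h1 : ∑ i', q i' j = 0 := by
          rw [← Finset.sum_apply, h]; exact hk0 j
        exact (Finset.sum_eq_zero_iff.1 h1) i (Finset.mem_univ i)
      · intro h; subst h; funext j; simp [hk0]
    rw [hS]
    simp [poch_zero, hk0]
  | succ n ih =>
    intro k hk
    obtain ⟨j0, hj0⟩ : ∃ j0, k j0 ≠ 0 := by
      by_contra hc
      push_neg at hc
      simp [hc] at hk
    set k' : Fin d → ℕ := Function.update k j0 (k j0 - 1) with hk'def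
    have hk'j0 : k' j0 = k j0 - 1 := by simp [hk'def]
    have hk'ne : ∀ j ≠ j0, k' j = k j := by
      intro j hj; simp [hk'def, Function.update_of_ne hj]
    have hk'sum : ∑ j, k' j = n := by
      have h1 : k j0 + ∑ j ∈ Finset.univ.erase j0, k j = n + 1 := by
        rw [Finset.add_sum_erase _ _ (Finset.mem_univ j0)]; exact hk
      have h2 : ∑ j, k' j = k' j0 + ∑ j ∈ Finset.univ.erase j0, k' j :=
        (Finset.add_sum_erase _ k' (Finset.mem_univ j0)).symm
      have h3 : ∑ j ∈ Finset.univ.erase j0, k' j = ∑ j ∈ Finset.univ.erase j0, k j :=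
        Finset.sum_congr rfl (fun j hj => hk'ne j (Finset.ne_of_mem_erase hj))
      rw [h2, h3, hk'j0]
      omega
    set F : (ι → Fin d → ℕ) → ℂ :=
      fun q => ∏ l, (poch (β l) (∑ j, q l j) / ∏ j, ((q l j).factorial : ℂ)) with hF
    have key : ∀ i : ι, ∑ q ∈ Sset ι k, (q i j0 : ℂ) * F q
        = ∑ p ∈ Sset ι k', (β i + (∑ j, p i j : ℕ)) * F p := by
      intro i
      have hsplit := Finset.sum_filter_add_sum_filter_not (Sset ι k)
        (fun q => q i j0 ≠ 0) (fun q => (q i j0 : ℂ) * F q)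
      have h0 : ∑ q ∈ (Sset ι k).filter (fun q => ¬ q i j0 ≠ 0), (q i j0 : ℂ) * F q = 0 := by
        apply Finset.sum_eq_zero
        intro q hq
        have : q i j0 = 0 := by simpa using (Finset.mem_filter.1 hq).2
        simp [this]
      rw [← hsplit, h0, add_zero]
      symm
      apply Finset.sum_nbij'
        (i := fun (p : ι → Fin d → ℕ) => bump p i j0 (p i j0 + 1))
        (j := fun (q : ι → Fin d → ℕ) => bump q i j0 (q i j0 - 1))
      · -- add maps into the filter
        intro p hp
        refine Finset.mem_filter.2 ⟨mem_Sset.2 ?_, by rw [bump_entry]; simp⟩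
        funext j
        rw [Finset.sum_apply]
        have h1 := sum_bump_col p i j0 (p i j0 + 1) j
        have h2 := col_Sset hp j
        by_cases hj : j = j0
        · rw [hj] at h1 ⊢
          rw [if_pos rfl] at h1
          have h2' := col_Sset hp j0
          rw [hk'j0] at h2'
          omega
        · rw [if_neg hj] at h1
          rw [hk'ne j hj] at h2
          omega
      · -- sub maps back
        intro q hq
        obtain ⟨hqS, hqne⟩ := Finset.mem_filter.1 hq
        have hq1 : 1 ≤ q i j0 := Nat.one_le_iff_ne_zero.2 (by simpa using hqne)
        apply mem_Sset.2
        funext j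
        rw [Finset.sum_apply]
        have h1 := sum_bump_col q i j0 (q i j0 - 1) j
        have h2 := col_Sset hqS j
        by_cases hj : j = j0
        · rw [hj] at h1 ⊢
          rw [if_pos rfl] at h1
          have h2' := col_Sset hqS j0
          rw [hk'j0]
          omega
        · rw [if_neg hj] at h1
          rw [hk'ne j hj]
          omega
      · -- left inverse
        intro p _
        rw [bump_entry p i j0, Nat.add_sub_cancel]
        exact bump_bump p i j0 (p i j0 + 1)
      · -- right inverse
        intro q hq
        have hqne := (Finset.mem_filter.1 hq).2
        have hq1 : 1 ≤ q i j0 := Nat.one_le_iff_ne_zero.2 (by simpa using hqne)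
        rw [bump_entry q i j0]
        have h2 : q i j0 - 1 + 1 = q i j0 := by omega
        rw [h2]
        exact bump_bump q i j0 (q i j0 - 1)
      · -- values agree
        intro p hp
        set q : ι → Fin d → ℕ := bump p i j0 (p i j0 + 1) with hq
        have hqij0 : q i j0 = p i j0 + 1 := bump_entry _ _ _ _
        have hqirow : ∑ j, q i j = (∑ j, p i j) + 1 := by
          have h := sum_bump_row p i j0 (p i j0 + 1)
          rw [← hq] at h
          omega
        have hfaci : (∏ j, ((q i j).factorial : ℂ))
            = ((p i j0 : ℂ) + 1) * ∏ j, ((p i j).factorial : ℂ) := by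
          rw [hq, prod_fac_bump_row]
          rw [← Finset.mul_prod_erase _ (fun j => ((p i j).factorial : ℂ))
            (Finset.mem_univ j0)]
          rw [Nat.factorial_succ]
          push_cast
          ring
        have hFq : F q = (poch (β i) ((∑ j, p i j) + 1)
              / (((p i j0 : ℂ) + 1) * ∏ j, ((p i j).factorial : ℂ)))
            * ∏ l ∈ Finset.univ.erase i,
                (poch (β l) (∑ j, p l j) / ∏ j, ((p l j).factorial : ℂ)) := by
          simp only [hF]
          rw [← Finset.mul_prod_erase _
            (fun l => poch (β l) (∑ j, q l j) / ∏ j, ((q l j).factorial : ℂ))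
            (Finset.mem_univ i)]
          congr 1
          · rw [hqirow, hfaci]
          · apply Finset.prod_congr rfl
            intro l hl
            rw [hq, bump_row_ne _ _ _ _ (Finset.ne_of_mem_erase hl)]
        have hFp : F p = (poch (β i) (∑ j, p i j) / ∏ j, ((p i j).factorial : ℂ))
            * ∏ l ∈ Finset.univ.erase i,
                (poch (β l) (∑ j, p l j) / ∏ j, ((p l j).factorial : ℂ)) := by
          simp only [hF]
          rw [← Finset.mul_prod_erase _
            (fun l => poch (β l) (∑ j, p l j) / ∏ j, ((p l j).factorial : ℂ))
            (Finset.mem_univ i)]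
        show (β i + (∑ j, p i j : ℕ)) * F p = (q i j0 : ℂ) * F q
        rw [hFp, hFq, hqij0, poch_succ]
        have hne1 : ((p i j0 : ℂ) + 1) ≠ 0 := by
          exact_mod_cast Nat.cast_add_one_ne_zero (R := ℂ) (p i j0)
        have hne2 : (∏ j, ((p i j).factorial : ℂ)) ≠ 0 := fac_prod_ne_zero _
        set E := ∏ l ∈ Finset.univ.erase i,
          (poch (β l) (∑ j, p l j) / ∏ j, ((p l j).factorial : ℂ)) with hE
        push_cast
        field_simp
    have main : (k j0 : ℂ) * ∑ q ∈ Sset ι k, F q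
        = ((∑ i, β i) + n) * ∑ p ∈ Sset ι k', F p := by
      calc (k j0 : ℂ) * ∑ q ∈ Sset ι k, F q = ∑ q ∈ Sset ι k, (k j0 : ℂ) * F q := by
            rw [Finset.mul_sum]
        _ = ∑ q ∈ Sset ι k, ∑ i, (q i j0 : ℂ) * F q := by
            apply Finset.sum_congr rfl
            intro q hq
            rw [← Finset.sum_mul, ← Nat.cast_sum, col_Sset hq j0]
        _ = ∑ i, ∑ q ∈ Sset ι k, (q i j0 : ℂ) * F q := Finset.sum_comm
        _ = ∑ i, ∑ p ∈ Sset ι k', (β i + (∑ j, p i j : ℕ)) * F p := by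
            apply Finset.sum_congr rfl; intro i _; exact key i
        _ = ∑ p ∈ Sset ι k', ∑ i, (β i + (∑ j, p i j : ℕ)) * F p := Finset.sum_comm
        _ = ∑ p ∈ Sset ι k', ((∑ i, β i) + n) * F p := by
            apply Finset.sum_congr rfl
            intro p hp
            rw [← Finset.sum_mul]
            congr 1
            rw [Finset.sum_add_distrib]
            congr 1
            have hsum2 : ∑ i : ι, ∑ j, p i j = n := by
              rw [Finset.sum_comm]
              rw [Finset.sum_congr rfl (fun j (_ : j ∈ Finset.univ) => col_Sset hp j)]
              exact hk'sum
            rw [← Nat.cast_sum, hsum2]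
        _ = ((∑ i, β i) + n) * ∑ p ∈ Sset ι k', F p := by rw [Finset.mul_sum]
    have hih := ih k' hk'sum
    rw [hk'sum] at hih
    have hfacs : (∏ j, ((k j).factorial : ℂ)) = (k j0 : ℂ) * ∏ j, ((k' j).factorial : ℂ) := by
      rw [← Finset.mul_prod_erase _ (fun j => ((k j).factorial : ℂ)) (Finset.mem_univ j0),
        ← Finset.mul_prod_erase _ (fun j => ((k' j).factorial : ℂ)) (Finset.mem_univ j0)]
      have he : ∀ j ∈ Finset.univ.erase j0, ((k' j).factorial : ℂ) = ((k j).factorial : ℂ) := by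
        intro j hjj; rw [hk'ne j (Finset.ne_of_mem_erase hjj)]
      rw [Finset.prod_congr rfl he, hk'j0]
      have hkj0 : k j0 = (k j0 - 1) + 1 := by omega
      calc ((k j0).factorial : ℂ) * ∏ j ∈ Finset.univ.erase j0, ((k j).factorial : ℂ)
          = (((k j0 - 1) + 1).factorial : ℂ) * ∏ j ∈ Finset.univ.erase j0, ((k j).factorial : ℂ) := by
            rw [← hkj0]
        _ = (k j0 : ℂ) * (((k j0 - 1).factorial : ℂ)
              * ∏ j ∈ Finset.univ.erase j0, ((k j).factorial : ℂ)) := by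
            rw [Nat.factorial_succ, ← hkj0]
            push_cast
            ring
    have hkj0ne : (k j0 : ℂ) ≠ 0 := Nat.cast_ne_zero.2 hj0
    have hmul : (k j0 : ℂ) * (∑ q ∈ Sset ι k, F q)
        = (k j0 : ℂ) * (poch (∑ i, β i) (∑ j, k j) / ∏ j, ((k j).factorial : ℂ)) := by
      rw [main, hih, hk, hfacs, poch_succ]
      have hne2 : (∏ j, ((k' j).factorial : ℂ)) ≠ 0 := fac_prod_ne_zero _
      field_simp
    exact mul_left_cancel₀ hkj0ne hmul


lemma poch_neg_div_fac (a b : ℕ) :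
    poch (-((a + b : ℕ) : ℂ)) a / (((a + b).factorial : ℂ)) = (-1)^a / (b.factorial : ℂ) := by
  rw [div_eq_div_iff (fac_ne_zero _) (fac_ne_zero _)]
  linear_combination poch_neg_fac a b

lemma VV' {ι : Type} [Fintype ι] [DecidableEq ι] {d : ℕ} (β : ι → ℂ)
    (hβ : ∀ i kk, poch (β i) kk ≠ 0) (hs : ∀ kk, poch (∑ i, β i) kk ≠ 0)
    (γ : ι → Fin d → ℕ) (m : Fin d → ℕ) :
    ∑ f ∈ Sset ι m, ∏ i,
        (poch (β i) (∑ j, f i j) * (∏ j, poch (-(f i j : ℂ)) (γ i j))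
          / (poch (β i) (∑ j, γ i j) * ∏ j, ((f i j).factorial : ℂ)))
      = poch (∑ i, β i) (∑ j, m j) * (∏ j, poch (-(m j : ℂ)) (∑ i, γ i j))
          / (poch (∑ i, β i) (∑ j, ∑ i, γ i j) * ∏ j, ((m j).factorial : ℂ)) := by
  classical
  by_cases hc : ∀ j, ∑ i, γ i j ≤ m j
  · -- good case
    set c : Fin d → ℕ := fun j => ∑ i, γ i j with hcdef
    set kres : Fin d → ℕ := fun j => m j - c j with hkres
    -- split off the vanishing terms
    have hsplit := Finset.sum_filter_add_sum_filter_not (Sset ι m)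
      (fun f => ∀ i j, γ i j ≤ f i j)
      (fun f => ∏ i, (poch (β i) (∑ j, f i j) * (∏ j, poch (-(f i j : ℂ)) (γ i j))
          / (poch (β i) (∑ j, γ i j) * ∏ j, ((f i j).factorial : ℂ))))
    have h0 : ∑ f ∈ (Sset ι m).filter (fun f => ¬ ∀ i j, γ i j ≤ f i j),
        ∏ i, (poch (β i) (∑ j, f i j) * (∏ j, poch (-(f i j : ℂ)) (γ i j))
          / (poch (β i) (∑ j, γ i j) * ∏ j, ((f i j).factorial : ℂ))) = 0 := by
      apply Finset.sum_eq_zero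
      intro f hf
      have hex : ∃ i j, f i j < γ i j := by
        have := (Finset.mem_filter.1 hf).2
        push_neg at this
        obtain ⟨i, j, hij⟩ := this
        exact ⟨i, j, by omega⟩
      obtain ⟨i0, j1, hij⟩ := hex
      apply Finset.prod_eq_zero (Finset.mem_univ i0)
      have : poch (-(f i0 j1 : ℂ)) (γ i0 j1) = 0 := poch_neg_nat_eq_zero hij
      rw [Finset.prod_eq_zero (Finset.mem_univ j1) this]
      simp
    rw [← hsplit, h0, add_zero]
    -- reindex by subtracting γ
    have hbij : ∑ f ∈ (Sset ι m).filter (fun f => ∀ i j, γ i j ≤ f i j),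
        ∏ i, (poch (β i) (∑ j, f i j) * (∏ j, poch (-(f i j : ℂ)) (γ i j))
          / (poch (β i) (∑ j, γ i j) * ∏ j, ((f i j).factorial : ℂ)))
        = ∑ p ∈ Sset ι kres,
          ∏ i, ((-1 : ℂ)^(∑ j, γ i j) * poch (β i + (∑ j, γ i j : ℕ)) (∑ j, p i j)
            / ∏ j, ((p i j).factorial : ℂ)) := by
      symm
      apply Finset.sum_nbij'
        (i := fun (p : ι → Fin d → ℕ) => fun i j => γ i j + p i j)
        (j := fun (f : ι → Fin d → ℕ) => fun i j => f i j - γ i j)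
      · intro p hp
        refine Finset.mem_filter.2 ⟨mem_Sset.2 ?_, fun i j => Nat.le_add_right _ _⟩
        funext j
        rw [Finset.sum_apply, Finset.sum_add_distrib]
        have h1 := col_Sset hp j
        have h2 : c j ≤ m j := hc j
        have h3 : kres j = m j - c j := rfl
        have hb : c j = ∑ i, γ i j := rfl
        omega
      · intro f hf
        obtain ⟨hfS, hfP⟩ := Finset.mem_filter.1 hf
        apply mem_Sset.2
        funext j
        rw [Finset.sum_apply]
        have h1 : ∑ i, (f i j - γ i j) + ∑ i, γ i j = ∑ i, f i j := by
          rw [← Finset.sum_add_distrib]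
          apply Finset.sum_congr rfl
          intro i _
          exact Nat.sub_add_cancel (hfP i j)
        have h2 := col_Sset hfS j
        have h3 : c j ≤ m j := hc j
        have h4 : kres j = m j - c j := rfl
        have hb : c j = ∑ i, γ i j := rfl
        omega
      · intro p _; funext i j; simp
      · intro f hf
        obtain ⟨_, hfP⟩ := Finset.mem_filter.1 hf
        funext i j
        exact Nat.add_sub_cancel' (hfP i j)
      · intro p hp
        apply Finset.prod_congr rfl
        intro i _
        have h1 : ∑ j, (γ i j + p i j) = (∑ j, γ i j) + ∑ j, p i j :=
          Finset.sum_add_distrib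
        have h2 : ∏ j, (poch (-((γ i j + p i j : ℕ) : ℂ)) (γ i j)
              / ((γ i j + p i j).factorial : ℂ))
            = ∏ j, ((-1 : ℂ)^(γ i j) / ((p i j).factorial : ℂ)) := by
          apply Finset.prod_congr rfl
          intro j _
          exact_mod_cast poch_neg_div_fac (γ i j) (p i j)
        rw [Finset.prod_div_distrib, Finset.prod_div_distrib] at h2
        rw [Finset.prod_pow_eq_pow_sum] at h2
        show ((-1 : ℂ)^(∑ j, γ i j) * poch (β i + (∑ j, γ i j : ℕ)) (∑ j, p i j)
            / ∏ j, ((p i j).factorial : ℂ))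
          = poch (β i) (∑ j, (γ i j + p i j))
              * (∏ j, poch (-((γ i j + p i j : ℕ) : ℂ)) (γ i j))
            / (poch (β i) (∑ j, γ i j) * ∏ j, (((γ i j + p i j) : ℕ).factorial : ℂ))
        rw [h1, poch_add]
        have hA : poch (β i) (∑ j, γ i j) ≠ 0 := hβ i _
        have hD1 : (∏ j, ((p i j).factorial : ℂ)) ≠ 0 := fac_prod_ne_zero _
        have hD2 : (∏ j, ((γ i j + p i j).factorial : ℂ)) ≠ 0 := fac_prod_ne_zero _
        rw [div_eq_div_iff hD2 hD1] at h2
        rw [div_eq_div_iff hD1 (mul_ne_zero hA hD2)]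
        linear_combination (-(poch (β i) (∑ j, γ i j) * poch (β i + (∑ j, γ i j : ℕ)) (∑ j, p i j)))
          * h2
    rw [hbij]
    -- pull out the sign and apply VV
    have hpull : ∑ p ∈ Sset ι kres,
        ∏ i, ((-1 : ℂ)^(∑ j, γ i j) * poch (β i + (∑ j, γ i j : ℕ)) (∑ j, p i j)
          / ∏ j, ((p i j).factorial : ℂ))
        = (-1 : ℂ)^(∑ i, ∑ j, γ i j) * ∑ p ∈ Sset ι kres,
          ∏ i, (poch (β i + (∑ j, γ i j : ℕ)) (∑ j, p i j) / ∏ j, ((p i j).factorial : ℂ)) := by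
      rw [Finset.mul_sum]
      apply Finset.sum_congr rfl
      intro p _
      rw [← Finset.prod_pow_eq_pow_sum, ← Finset.prod_mul_distrib]
      apply Finset.prod_congr rfl
      intro i _
      ring
    rw [hpull, VV (fun i => β i + (∑ j, γ i j : ℕ)) kres]
    -- now pure poch algebra
    have hswap : ∑ i, ∑ j, γ i j = ∑ j, c j := Finset.sum_comm
    have hsum1 : ∑ i, (β i + (∑ j, γ i j : ℕ)) = (∑ i, β i) + (∑ j, c j : ℕ) := by
      rw [Finset.sum_add_distrib, ← Nat.cast_sum, hswap]
    have hm : ∀ j, m j = c j + kres j := by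
      intro j
      have h1 := hc j
      have hb : c j = ∑ i, γ i j := rfl
      have h2 : kres j = m j - c j := rfl
      omega
    have hmsum : ∑ j, m j = (∑ j, c j) + ∑ j, kres j := by
      rw [← Finset.sum_add_distrib]
      exact Finset.sum_congr rfl (fun j _ => hm j)
    have hnum : (∏ j, poch (-(m j : ℂ)) (∑ i, γ i j)) / ∏ j, ((m j).factorial : ℂ)
        = (-1 : ℂ)^(∑ j, c j) / ∏ j, ((kres j).factorial : ℂ) := by
      calc (∏ j, poch (-(m j : ℂ)) (∑ i, γ i j)) / ∏ j, ((m j).factorial : ℂ)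
          = ∏ j, (poch (-(m j : ℂ)) (∑ i, γ i j) / ((m j).factorial : ℂ)) :=
            (Finset.prod_div_distrib _ _).symm
        _ = ∏ j, ((-1:ℂ)^(c j) / ((kres j).factorial : ℂ)) := by
            apply Finset.prod_congr rfl
            intro j _
            have h := poch_neg_div_fac (c j) (kres j)
            rw [← hm j] at h
            exact_mod_cast h
            
        _ = (-1:ℂ)^(∑ j, c j) / ∏ j, ((kres j).factorial : ℂ) := by
            rw [Finset.prod_div_distrib, Finset.prod_pow_eq_pow_sum]
    rw [hsum1, hmsum, poch_add]
    have hZ1 : poch (∑ i, β i) (∑ j, c j) ≠ 0 := hs _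
    have hfm : (∏ j, ((m j).factorial : ℂ)) ≠ 0 := fac_prod_ne_zero _
    have hfk : (∏ j, ((kres j).factorial : ℂ)) ≠ 0 := fac_prod_ne_zero _
    rw [hswap]
    have hEta : Finset.univ.sum c = ∑ j, c j := rfl
    rw [hEta]
    rw [div_eq_div_iff hfm hfk] at hnum
    rw [← mul_div_assoc, div_eq_div_iff hfk (mul_ne_zero hZ1 hfm)]
    linear_combination (-(poch (∑ i, β i) (∑ j, c j)
      * poch ((∑ i, β i) + (∑ j, c j : ℕ)) (∑ j, kres j))) * hnum
  · -- bad case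
    push_neg at hc
    obtain ⟨j0, hj0⟩ := hc
    have hR : ∏ j, poch (-(m j : ℂ)) (∑ i, γ i j) = 0 := by
      apply Finset.prod_eq_zero (Finset.mem_univ j0)
      exact poch_neg_nat_eq_zero hj0
    rw [hR]
    rw [mul_zero, zero_div]
    apply Finset.sum_eq_zero
    intro f hf
    have hex : ∃ i0, f i0 j0 < γ i0 j0 := by
      by_contra hno
      push_neg at hno
      have : ∑ i, γ i j0 ≤ ∑ i, f i j0 := Finset.sum_le_sum (fun i _ => hno i)
      rw [col_Sset (mem_Sset.2 (mem_Sset.1 hf)) j0] at this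
      omega
    obtain ⟨i0, hi0⟩ := hex
    apply Finset.prod_eq_zero (Finset.mem_univ i0)
    rw [Finset.prod_eq_zero (Finset.mem_univ j0) (poch_neg_nat_eq_zero hi0)]
    simp

lemma VVw {ι : Type} [Fintype ι] [DecidableEq ι] {d : ℕ} (β : ι → ℂ) (w : Fin d → ℂ)
    (k : Fin d → ℕ) :
    ∑ v ∈ Sset ι k, ∏ i,
        (poch (β i) (∑ j, v i j) * ∏ j, ((w j)^(v i j) / ((v i j).factorial : ℂ)))
      = poch (∑ i, β i) (∑ j, k j) * ∏ j, ((w j)^(k j) / ((k j).factorial : ℂ)) := by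
  have hterm : ∀ v ∈ Sset ι k, ∏ i,
        (poch (β i) (∑ j, v i j) * ∏ j, ((w j)^(v i j) / ((v i j).factorial : ℂ)))
      = (∏ j, (w j)^(k j)) *
          ∏ i, (poch (β i) (∑ j, v i j) / ∏ j, ((v i j).factorial : ℂ)) := by
    intro v hv
    have h1 : ∀ i : ι, poch (β i) (∑ j, v i j) * ∏ j, ((w j)^(v i j) / ((v i j).factorial : ℂ))
        = (∏ j, (w j)^(v i j)) *
            (poch (β i) (∑ j, v i j) / ∏ j, ((v i j).factorial : ℂ)) := by
      intro i
      rw [Finset.prod_div_distrib]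
      ring
    rw [Finset.prod_congr rfl (fun i _ => h1 i), Finset.prod_mul_distrib]
    congr 1
    rw [Finset.prod_comm]
    apply Finset.prod_congr rfl
    intro j _
    rw [Finset.prod_pow_eq_pow_sum, col_Sset hv j]
  rw [Finset.sum_congr rfl hterm, ← Finset.mul_sum, VV β k, Finset.prod_div_distrib]
  ring

noncomputable def MatS {d : ℕ} (x : Fin d → ℕ) : Finset (Matrix (Fin d) (Fin d) ℕ) :=
  Fintype.piFinset (fun i => Fintype.piFinset (fun _ => Finset.range (x i + 1)))

lemma mem_MatS {d : ℕ} {x : Fin d → ℕ} {A : Matrix (Fin d) (Fin d) ℕ} :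
    A ∈ MatS x ↔ ∀ i j, A i j ≤ x i := by
  unfold MatS
  refine Fintype.mem_piFinset.trans ?_
  apply forall_congr'
  intro i
  rw [Fintype.mem_piFinset]
  apply forall_congr'
  intro j
  rw [Finset.mem_range, Nat.lt_succ_iff]

lemma Meixner_eq_sum {d : ℕ} (U : Matrix (Fin d) (Fin d) ℂ) (β : ℂ) (nn x : Fin d → ℕ) :
    Meixner U β nn x = ∑ A ∈ MatS x,
      ((∏ j, poch (-(nn j : ℂ)) (∑ i, A i j)) * (∏ i, poch (-(x i : ℂ)) (∑ j, A i j)) /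
          poch β (∑ i, ∑ j, A i j)) *
        ∏ i, ∏ j, (1 - U i j) ^ (A i j) / ((A i j).factorial : ℂ) := by
  apply tsum_eq_sum
  intro A hA
  rw [mem_MatS] at hA
  push_neg at hA
  obtain ⟨i, j, hij⟩ := hA
  have hrow : x i < ∑ j', A i j' :=
    lt_of_lt_of_le hij (Finset.single_le_sum (f := fun j' => A i j')
      (fun _ _ => Nat.zero_le _) (Finset.mem_univ j))
  have h0 : poch (-(x i : ℂ)) (∑ j', A i j') = 0 := poch_neg_nat_eq_zero hrow
  rw [Finset.prod_eq_zero (f := fun i' => poch (-(x i' : ℂ)) (∑ j', A i' j'))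
    (Finset.mem_univ i) h0]
  simp

noncomputable def Gfun {d N : ℕ} (U : Matrix (Fin d) (Fin d) ℂ) (n : Fin N → Fin d → ℕ)
    (i : Fin N) (B : Matrix (Fin d) (Fin d) ℕ) : ℂ :=
  (∏ t, poch (-(n i t : ℂ)) (∑ j, B t j)) *
    ∏ t, ∏ j, (1 - U t j) ^ (B t j) / ((B t j).factorial : ℂ)

noncomputable def Theta {d N : ℕ} (U : Matrix (Fin d) (Fin d) ℂ) (σc : ℂ) (m : Fin d → ℕ)
    (n : Fin N → Fin d → ℕ) (B : Fin N → Matrix (Fin d) (Fin d) ℕ) : ℂ :=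
  (∏ i, Gfun U n i (B i)) *
    (poch σc (∑ j, m j) * (∏ j, poch (-(m j : ℂ)) (∑ i, ∑ t, B i t j)) /
      (poch σc (∑ j, ∑ i, ∑ t, B i t j) * ∏ j, ((m j).factorial : ℂ)))

lemma key1 {d N : ℕ} (U : Matrix (Fin d) (Fin d) ℂ) (σ : Fin N → ℝ) (hσ : ∀ i, 0 < σ i)
    (hsig : ∀ kk, poch (∑ i, (σ i : ℂ)) kk ≠ 0)
    (m : Fin d → ℕ) (n : Fin N → Fin d → ℕ) (B : Fin N → Matrix (Fin d) (Fin d) ℕ) :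
    ∑ f ∈ Sset (Fin N) m, ∏ i,
      (poch ((σ i : ℂ)) (∑ j, f i j) / (∏ j, ((f i j).factorial : ℂ)) *
        (((∏ j, poch (-(f i j : ℂ)) (∑ t, B i t j)) *
            (∏ t, poch (-(n i t : ℂ)) (∑ j, B i t j)) /
            poch ((σ i : ℂ)) (∑ t, ∑ j, B i t j)) *
          ∏ t, ∏ j, (1 - U t j) ^ (B i t j) / ((B i t j).factorial : ℂ)))
      = Theta U (∑ i, (σ i : ℂ)) m n B := by
  have hβ : ∀ (i : Fin N) (kk : ℕ), poch ((σ i : ℂ)) kk ≠ 0 :=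
    fun i kk => poch_ne_zero_of_pos (hσ i) kk
  have hper : ∀ f ∈ Sset (Fin N) m, ∏ i,
      (poch ((σ i : ℂ)) (∑ j, f i j) / (∏ j, ((f i j).factorial : ℂ)) *
        (((∏ j, poch (-(f i j : ℂ)) (∑ t, B i t j)) *
            (∏ t, poch (-(n i t : ℂ)) (∑ j, B i t j)) /
            poch ((σ i : ℂ)) (∑ t, ∑ j, B i t j)) *
          ∏ t, ∏ j, (1 - U t j) ^ (B i t j) / ((B i t j).factorial : ℂ)))
      = (∏ i, (poch ((σ i : ℂ)) (∑ j, f i j) *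
            (∏ j, poch (-(f i j : ℂ)) (∑ t, B i t j)) /
            (poch ((σ i : ℂ)) (∑ j, ∑ t, B i t j) * ∏ j, ((f i j).factorial : ℂ)))) *
          ∏ i, Gfun U n i (B i) := by
    intro f _
    rw [← Finset.prod_mul_distrib]
    apply Finset.prod_congr rfl
    intro i _
    have hsw : ∑ t, ∑ j, B i t j = ∑ j, ∑ t, B i t j := Finset.sum_comm
    rw [hsw, Gfun]
    ring
  rw [Finset.sum_congr rfl hper, ← Finset.sum_mul]
  have hVV' : (∑ f ∈ Sset (Fin N) m, ∏ i,
      (poch ((σ i : ℂ)) (∑ j, f i j) * (∏ j, poch (-(f i j : ℂ)) (∑ t, B i t j)) /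
        (poch ((σ i : ℂ)) (∑ j, ∑ t, B i t j) * ∏ j, ((f i j).factorial : ℂ))))
      = poch (∑ i, (σ i : ℂ)) (∑ j, m j) *
          (∏ j, poch (-(m j : ℂ)) (∑ i, ∑ t, B i t j)) /
          (poch (∑ i, (σ i : ℂ)) (∑ j, ∑ i, ∑ t, B i t j) * ∏ j, ((m j).factorial : ℂ)) :=
    VV' (fun i => (σ i : ℂ)) hβ hsig (fun i j => ∑ t, B i t j) m
  rw [hVV', Theta]
  ring

lemma key2 {d N : ℕ} (U : Matrix (Fin d) (Fin d) ℂ) (σc : ℂ) (m : Fin d → ℕ)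
    (n : Fin N → Fin d → ℕ) (A : Matrix (Fin d) (Fin d) ℕ) :
    poch σc (∑ j, m j) / (∏ j, ((m j).factorial : ℂ)) *
      (((∏ j, poch (-(m j : ℂ)) (∑ t, A t j)) *
          (∏ t, poch (-((∑ i, n i t : ℕ) : ℂ)) (∑ j, A t j)) /
          poch σc (∑ t, ∑ j, A t j)) *
        ∏ t, ∏ j, (1 - U t j) ^ (A t j) / ((A t j).factorial : ℂ))
      = ∑ V ∈ Fintype.piFinset (fun t => Sset (Fin N) (A t)),
          (poch σc (∑ j, m j) * (∏ j, poch (-(m j : ℂ)) (∑ t, A t j)) /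
            (poch σc (∑ j, ∑ t, A t j) * ∏ j, ((m j).factorial : ℂ))) *
          ∏ t, ∏ i, (poch (-(n i t : ℂ)) (∑ j, V t i j) *
            ∏ j, ((1 - U t j) ^ (V t i j) / ((V t i j).factorial : ℂ))) := by
  have hrow : ∀ t : Fin d, ∑ v ∈ Sset (Fin N) (A t), ∏ i,
        (poch (-(n i t : ℂ)) (∑ j, v i j) *
          ∏ j, ((1 - U t j) ^ (v i j) / ((v i j).factorial : ℂ)))
      = poch (-((∑ i, n i t : ℕ) : ℂ)) (∑ j, A t j) *
          ∏ j, ((1 - U t j) ^ (A t j) / ((A t j).factorial : ℂ)) := by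
    intro t
    have hcast : (∑ i, -(n i t : ℂ)) = -((∑ i, n i t : ℕ) : ℂ) := by
      push_cast
      rw [← Finset.sum_neg_distrib]
    have h : (∑ v ∈ Sset (Fin N) (A t), ∏ i,
        (poch (-(n i t : ℂ)) (∑ j, v i j) *
          ∏ j, ((1 - U t j) ^ (v i j) / ((v i j).factorial : ℂ))))
        = poch (∑ i, -(n i t : ℂ)) (∑ j, A t j) *
          ∏ j, ((1 - U t j) ^ (A t j) / ((A t j).factorial : ℂ)) :=
      VVw (fun i => -(n i t : ℂ)) (fun j => 1 - U t j) (A t)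
    rw [h, hcast]
  rw [← Finset.mul_sum]
  have hexp : (∏ t, ∑ v ∈ Sset (Fin N) (A t), ∏ i,
        (poch (-(n i t : ℂ)) (∑ j, v i j) *
          ∏ j, ((1 - U t j) ^ (v i j) / ((v i j).factorial : ℂ))))
      = ∑ V ∈ Fintype.piFinset (fun t => Sset (Fin N) (A t)), ∏ t, ∏ i,
          (poch (-(n i t : ℂ)) (∑ j, V t i j) *
            ∏ j, ((1 - U t j) ^ (V t i j) / ((V t i j).factorial : ℂ))) :=
    Finset.prod_univ_sum (fun t => Sset (Fin N) (A t))
      (fun t v => ∏ i, (poch (-(n i t : ℂ)) (∑ j, v i j) *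
        ∏ j, ((1 - U t j) ^ (v i j) / ((v i j).factorial : ℂ))))
  rw [← hexp]
  rw [Finset.prod_congr rfl (fun t _ => hrow t)]
  rw [Finset.prod_mul_distrib]
  have hsw : ∑ t, ∑ j, A t j = ∑ j, ∑ t, A t j := Finset.sum_comm
  rw [hsw]
  ring

lemma key3 {d N : ℕ} (U : Matrix (Fin d) (Fin d) ℂ) (σc : ℂ) (m : Fin d → ℕ)
    (n : Fin N → Fin d → ℕ) (A : Matrix (Fin d) (Fin d) ℕ) (V : Fin d → Fin N → Fin d → ℕ)
    (hV : ∀ t, V t ∈ Sset (Fin N) (A t)) :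
    (poch σc (∑ j, m j) * (∏ j, poch (-(m j : ℂ)) (∑ t, A t j)) /
        (poch σc (∑ j, ∑ t, A t j) * ∏ j, ((m j).factorial : ℂ))) *
      ∏ t, ∏ i, (poch (-(n i t : ℂ)) (∑ j, V t i j) *
        ∏ j, ((1 - U t j) ^ (V t i j) / ((V t i j).factorial : ℂ)))
    = Theta U σc m n (fun i t j => V t i j) := by
  have hcol : ∀ j, (∑ i, ∑ t, V t i j) = ∑ t, A t j := by
    intro j
    rw [Finset.sum_comm]
    exact Finset.sum_congr rfl (fun t _ => col_Sset (hV t) j)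
  show _ = (∏ i, Gfun U n i (fun t j => V t i j)) *
    (poch σc (∑ j, m j) * (∏ j, poch (-(m j : ℂ)) (∑ i, ∑ t, V t i j)) /
      (poch σc (∑ j, ∑ i, ∑ t, V t i j) * ∏ j, ((m j).factorial : ℂ)))
  have hG : (∏ i, Gfun U n i (fun t j => V t i j))
      = ∏ t, ∏ i, (poch (-(n i t : ℂ)) (∑ j, V t i j) *
          ∏ j, ((1 - U t j) ^ (V t i j) / ((V t i j).factorial : ℂ))) := by
    calc ∏ i, Gfun U n i (fun t j => V t i j)
        = (∏ i, ∏ t, poch (-(n i t : ℂ)) (∑ j, V t i j)) *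
            ∏ i, ∏ t, ∏ j, ((1 - U t j) ^ (V t i j) / ((V t i j).factorial : ℂ)) := by
          simp only [Gfun]
          exact Finset.prod_mul_distrib
      _ = (∏ t, ∏ i, poch (-(n i t : ℂ)) (∑ j, V t i j)) *
            ∏ t, ∏ i, ∏ j, ((1 - U t j) ^ (V t i j) / ((V t i j).factorial : ℂ)) := by
          congr 1 <;> exact Finset.prod_comm
      _ = ∏ t, ∏ i, (poch (-(n i t : ℂ)) (∑ j, V t i j) *
            ∏ j, ((1 - U t j) ^ (V t i j) / ((V t i j).factorial : ℂ))) := by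
          rw [← Finset.prod_mul_distrib]
          exact Finset.prod_congr rfl (fun t _ => (Finset.prod_mul_distrib).symm)
  rw [hG]
  have h2 : (∏ j, poch (-(m j : ℂ)) (∑ i, ∑ t, V t i j))
      = ∏ j, poch (-(m j : ℂ)) (∑ t, A t j) :=
    Finset.prod_congr rfl (fun j _ => by rw [hcol j])
  have h3 : (∑ j, ∑ i, ∑ t, V t i j) = ∑ j, ∑ t, A t j :=
    Finset.sum_congr rfl (fun j _ => hcol j)
  rw [h2, h3]
  ring

def emap {d N : ℕ} : ((_ : Matrix (Fin d) (Fin d) ℕ) × (Fin d → Fin N → Fin d → ℕ)) →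
    (Fin N → Matrix (Fin d) (Fin d) ℕ) := fun P i t j => P.2 t i j

/-- Convolution identity for multivariate Meixner polynomials: for `σ = σ₁+⋯+σ_N` and
`n = n₁+⋯+n_N`,
`(σ)_{|m|}/m! · M_m(n;U,σ) = ∑_{m₁+⋯+m_N=m} ∏_i (σᵢ)_{|mᵢ|}/mᵢ! · M_{mᵢ}(nᵢ;U,σᵢ)`. -/
theorem stmt16 (d N : ℕ) (hN : 2 ≤ N) (σ : Fin N → ℝ) (hσ : ∀ i, 0 < σ i)
    (U : Matrix (Fin d) (Fin d) ℂ) (m : Fin d → ℕ) (n : Fin N → Fin d → ℕ) :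
    poch (∑ i, (σ i : ℂ)) (∑ j, m j) / (∏ j, ((m j).factorial : ℂ)) *
        Meixner U (∑ i, (σ i : ℂ)) m (∑ i, n i) =
      ∑' f : Fin N → Fin d → ℕ,
        if (∑ i, f i) = m then
          ∏ i, poch ((σ i : ℂ)) (∑ j, f i j) / (∏ j, ((f i j).factorial : ℂ)) *
            Meixner U ((σ i : ℂ)) (f i) (n i)
        else 0 := by
  classical
  have hNpos : 0 < N := by omega
  haveI : Nonempty (Fin N) := ⟨⟨0, hNpos⟩⟩
  have hsig : ∀ kk, poch (∑ i, (σ i : ℂ)) kk ≠ 0 := by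
    intro kk
    have hpos : (0:ℝ) < ∑ i, σ i := Finset.sum_pos (fun i _ => hσ i) Finset.univ_nonempty
    have hcast : (∑ i, (σ i : ℂ)) = ((∑ i, σ i : ℝ) : ℂ) := by push_cast; ring
    rw [hcast]
    exact poch_ne_zero_of_pos hpos kk
  -- Step 1 : the tsum on the RHS is a finite sum
  have hstep1 : (∑' f : Fin N → Fin d → ℕ,
      if (∑ i, f i) = m then
        ∏ i, poch ((σ i : ℂ)) (∑ j, f i j) / (∏ j, ((f i j).factorial : ℂ)) *
          Meixner U ((σ i : ℂ)) (f i) (n i)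
      else 0)
      = ∑ f ∈ Sset (Fin N) m,
          ∏ i, poch ((σ i : ℂ)) (∑ j, f i j) / (∏ j, ((f i j).factorial : ℂ)) *
            Meixner U ((σ i : ℂ)) (f i) (n i) := by
    rw [tsum_eq_sum (s := Sset (Fin N) m) (fun f hf => if_neg (fun h => hf (mem_Sset.2 h)))]
    exact Finset.sum_congr rfl (fun f hf => if_pos (mem_Sset.1 hf))
  rw [hstep1]
  -- Step 2 : expand each Meixner factor
  have hstep2 : ∀ f ∈ Sset (Fin N) m,
      (∏ i, poch ((σ i : ℂ)) (∑ j, f i j) / (∏ j, ((f i j).factorial : ℂ)) *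
        Meixner U ((σ i : ℂ)) (f i) (n i))
      = ∑ B ∈ Fintype.piFinset (fun i => MatS (n i)), ∏ i,
          (poch ((σ i : ℂ)) (∑ j, f i j) / (∏ j, ((f i j).factorial : ℂ)) *
            (((∏ j, poch (-(f i j : ℂ)) (∑ t, B i t j)) *
                (∏ t, poch (-(n i t : ℂ)) (∑ j, B i t j)) /
                poch ((σ i : ℂ)) (∑ t, ∑ j, B i t j)) *
              ∏ t, ∏ j, (1 - U t j) ^ (B i t j) / ((B i t j).factorial : ℂ))) := by
    intro f _
    have h1 : ∀ i : Fin N,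
        poch ((σ i : ℂ)) (∑ j, f i j) / (∏ j, ((f i j).factorial : ℂ)) *
          Meixner U ((σ i : ℂ)) (f i) (n i)
        = ∑ B ∈ MatS (n i),
            poch ((σ i : ℂ)) (∑ j, f i j) / (∏ j, ((f i j).factorial : ℂ)) *
              (((∏ j, poch (-(f i j : ℂ)) (∑ t, B t j)) *
                  (∏ t, poch (-(n i t : ℂ)) (∑ j, B t j)) /
                  poch ((σ i : ℂ)) (∑ t, ∑ j, B t j)) *
                ∏ t, ∏ j, (1 - U t j) ^ (B t j) / ((B t j).factorial : ℂ)) := by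
      intro i
      rw [Meixner_eq_sum, Finset.mul_sum]
    rw [Finset.prod_congr rfl (fun i _ => h1 i)]
    exact Finset.prod_univ_sum (fun i => MatS (n i))
      (fun i B => poch ((σ i : ℂ)) (∑ j, f i j) / (∏ j, ((f i j).factorial : ℂ)) *
        (((∏ j, poch (-(f i j : ℂ)) (∑ t, B t j)) *
            (∏ t, poch (-(n i t : ℂ)) (∑ j, B t j)) /
            poch ((σ i : ℂ)) (∑ t, ∑ j, B t j)) *
          ∏ t, ∏ j, (1 - U t j) ^ (B t j) / ((B t j).factorial : ℂ)))
  rw [Finset.sum_congr rfl hstep2, Finset.sum_comm]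
  -- Step 3 : apply key1 to each inner sum
  rw [Finset.sum_congr rfl (fun B _ => key1 U σ hσ hsig m n B)]
  -- Step 4 : expand the LHS
  have hXfun : (∑ i, n i) = fun t => ∑ i, n i t := by
    funext t
    exact Finset.sum_apply _ _ _
  have hLHS : poch (∑ i, (σ i : ℂ)) (∑ j, m j) / (∏ j, ((m j).factorial : ℂ)) *
        Meixner U (∑ i, (σ i : ℂ)) m (∑ i, n i)
      = ∑ A ∈ MatS (fun t => ∑ i, n i t),
          poch (∑ i, (σ i : ℂ)) (∑ j, m j) / (∏ j, ((m j).factorial : ℂ)) *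
            (((∏ j, poch (-(m j : ℂ)) (∑ t, A t j)) *
                (∏ t, poch (-((∑ i, n i t : ℕ) : ℂ)) (∑ j, A t j)) /
                poch (∑ i, (σ i : ℂ)) (∑ t, ∑ j, A t j)) *
              ∏ t, ∏ j, (1 - U t j) ^ (A t j) / ((A t j).factorial : ℂ)) := by
    rw [hXfun, Meixner_eq_sum, Finset.mul_sum]
  rw [hLHS]
  rw [Finset.sum_congr rfl (fun A _ => key2 U (∑ i, (σ i : ℂ)) m n A)]
  rw [Finset.sum_sigma']
  -- Step 5 : reindex
  have hsub : Fintype.piFinset (fun i => MatS (n i)) ⊆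
      ((MatS (fun t => ∑ i, n i t)).sigma
        (fun A => Fintype.piFinset (fun t => Sset (Fin N) (A t)))).image emap := by
    intro B hB
    rw [Finset.mem_image]
    refine ⟨⟨fun t j => ∑ i, B i t j, fun t i j => B i t j⟩, ?_, rfl⟩
    rw [Finset.mem_sigma]
    constructor
    · rw [mem_MatS]
      intro t j
      show ∑ i, B i t j ≤ ∑ i, n i t
      exact Finset.sum_le_sum (fun i _ => mem_MatS.1 (Fintype.mem_piFinset.1 hB i) t j)
    · rw [Fintype.mem_piFinset]
      intro t
      apply mem_Sset.2
      funext j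
      rw [Finset.sum_apply]
  have hvanish : ∀ B ∈ ((MatS (fun t => ∑ i, n i t)).sigma
        (fun A => Fintype.piFinset (fun t => Sset (Fin N) (A t)))).image emap,
      B ∉ Fintype.piFinset (fun i => MatS (n i)) →
      Theta U (∑ i, (σ i : ℂ)) m n B = 0 := by
    intro B _ hB
    have hex : ∃ i t j, n i t < B i t j := by
      by_contra hno
      push_neg at hno
      exact hB (Fintype.mem_piFinset.2 (fun i => mem_MatS.2 (fun t j => hno i t j)))
    obtain ⟨i0, t0, j1, hlt⟩ := hex
    have hG0 : Gfun U n i0 (B i0) = 0 := by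
      rw [Gfun]
      have h0 : poch (-(n i0 t0 : ℂ)) (∑ j, B i0 t0 j) = 0 :=
        poch_neg_nat_eq_zero (lt_of_lt_of_le hlt
          (Finset.single_le_sum (f := fun j => B i0 t0 j) (fun _ _ => Nat.zero_le _)
            (Finset.mem_univ j1)))
      rw [Finset.prod_eq_zero (Finset.mem_univ t0) h0, zero_mul]
    rw [Theta, Finset.prod_eq_zero (Finset.mem_univ i0) hG0, zero_mul]
  have hinj : ∀ P ∈ ((MatS (fun t => ∑ i, n i t)).sigma
        (fun A => Fintype.piFinset (fun t => Sset (Fin N) (A t)))),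
      ∀ Q ∈ ((MatS (fun t => ∑ i, n i t)).sigma
        (fun A => Fintype.piFinset (fun t => Sset (Fin N) (A t)))),
      emap P = emap Q → P = Q := by
    rintro ⟨A, V⟩ hP ⟨A', V'⟩ hQ h
    have hV : V = V' := by
      funext t i j
      exact congrFun (congrFun (congrFun h i) t) j
    have hA : A = A' := by
      funext t
      have h1 : ∑ i, V t i = A t :=
        mem_Sset.1 ((Fintype.mem_piFinset.1 (Finset.mem_sigma.1 hP).2) t)
      have h2 : ∑ i, V' t i = A' t :=
        mem_Sset.1 ((Fintype.mem_piFinset.1 (Finset.mem_sigma.1 hQ).2) t)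
      rw [← h1, ← h2, hV]
    subst hA
    subst hV
    rfl
  rw [Finset.sum_subset hsub (by exact hvanish), Finset.sum_image hinj]
  apply Finset.sum_congr rfl
  rintro ⟨A, V⟩ hP
  exact key3 U (∑ i, (σ i : ℂ)) m n A V
    (fun t => (Fintype.mem_piFinset.1 (Finset.mem_sigma.1 hP).2) t)
end
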